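/- arXiv:1602.08694 — 7 statements merged into one kernel-verified Lean document; each statement's English description precedes it below -/
import Mathlib

section
/- For any κ ∈ ℂ, set D = ∂² + z³ + κ in the Weyl algebra ℂ[z][∂], and define P = D² + 2z and Q = D³ + (3/2)(zD + Dz). Then P and Q commute: PQ = QP. -/
/-!
Write `δ = ⁅D, ·⁆`. The Weyl relation `⁅d, z⁆ = 1` gives `δ z = 2d` and `δ d = -3z²`. Hence
`⁅P, D³⁆ = -4(D²d + DdD + dD²)` and `⁅P, zD + Dz⁆ = 2(D²d + 2DdD + dD²) - 4(zd + dz)`, so with the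
coefficient `3/2` the commutator `⁅P, Q⁆` collapses to `-δ² d - 6(zd + dz)`, which vanishes because
`δ² d = -3 δ(z²) = -6(zd + dz)`.
-/

section

variable {A : Type*} [Ring A]

theorem weyl_lie_cubic_z {z d k : A} (h : ⁅d, z⁆ = 1) (hk : Commute k z) :
    ⁅d ^ 2 + z ^ 3 + k, z⁆ = 2 * d := by
  have expand : ⁅d ^ 2 + z ^ 3 + k, z⁆ = d * ⁅d, z⁆ + ⁅d, z⁆ * d + ⁅k, z⁆ := by
    simp only [Ring.lie_def]; noncomm_ring
  rw [expand, h, commute_iff_lie_eq.mp hk]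
  noncomm_ring

theorem weyl_lie_cubic_d {z d k : A} (h : ⁅d, z⁆ = 1) (hk : Commute k d) :
    ⁅d ^ 2 + z ^ 3 + k, d⁆ = -(3 * z ^ 2) := by
  have expand : ⁅d ^ 2 + z ^ 3 + k, d⁆ =
      -(z ^ 2 * ⁅d, z⁆ + z * ⁅d, z⁆ * z + ⁅d, z⁆ * z ^ 2) + ⁅k, d⁆ := by
    simp only [Ring.lie_def]; noncomm_ring
  rw [expand, h, commute_iff_lie_eq.mp hk]
  noncomm_ring

theorem dixmier_commute_of_lie_eq {D z d c : A} (hz : ⁅D, z⁆ = 2 * d)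
    (hd : ⁅D, d⁆ = -(3 * z ^ 2)) (hc : ∀ x, Commute c x) (h2c : 2 * c = 3) :
    Commute (D ^ 2 + 2 * z) (D ^ 3 + c * (z * D + D * z)) := by
  set P := D ^ 2 + 2 * z
  have lie_P_cube :
      ⁅P, D ^ 3⁆ = -(2 * (D ^ 2 * ⁅D, z⁆ + D * ⁅D, z⁆ * D + ⁅D, z⁆ * D ^ 2)) := by
    simp only [P, Ring.lie_def]; noncomm_ring
  have lie_P_sym : ⁅P, z * D + D * z⁆ = (D * ⁅D, z⁆ + ⁅D, z⁆ * D) * D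
      + D * (D * ⁅D, z⁆ + ⁅D, z⁆ * D) - 2 * (z * ⁅D, z⁆ + ⁅D, z⁆ * z) := by
    simp only [P, Ring.lie_def]; noncomm_ring
  have lie_P_Q : ⁅P, D ^ 3 + c * (z * D + D * z)⁆ = ⁅P, D ^ 3⁆ + c * ⁅P, z * D + D * z⁆ := by
    rw [Ring.lie_def, Ring.lie_def, Ring.lie_def, mul_add, ← mul_assoc P c, ← (hc P).eq]
    noncomm_ring
  have lie_D_lie_D_d : D ^ 2 * d - 2 * (D * d * D) + d * D ^ 2 = -(6 * (z * d + d * z)) :=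
    calc _ = ⁅D, ⁅D, d⁆⁆ := by simp only [Ring.lie_def]; noncomm_ring
      _ = -(3 * (⁅D, z⁆ * z + z * ⁅D, z⁆)) := by rw [hd]; simp only [Ring.lie_def]; noncomm_ring
      _ = _ := by rw [hz]; noncomm_ring
  rw [hz] at lie_P_cube lie_P_sym
  rw [commute_iff_lie_eq, lie_P_Q, lie_P_cube, lie_P_sym]
  calc _ = -(4 * (D ^ 2 * d + D * d * D + d * D ^ 2))
        + (2 * c) * (D ^ 2 * d + 2 * (D * d * D) + d * D ^ 2 - 2 * (z * d + d * z)) := by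
        rw [mul_assoc, ← (hc 2).eq]; noncomm_ring
    _ = -(D ^ 2 * d - 2 * (D * d * D) + d * D ^ 2) - 6 * (z * d + d * z) := by
        rw [h2c]; noncomm_ring
    _ = 0 := by rw [lie_D_lie_D_d]; noncomm_ring

end

/-- Dixmier's example: in any ℂ-algebra with elements `z`, `d` satisfying the
Weyl relation `d*z - z*d = 1` (in particular in the Weyl algebra ℂ[z][∂]),
the operators `P = D² + 2z` and `Q = D³ + (3/2)(zD + Dz)` with
`D = d² + z³ + κ` commute. -/
theorem dixmier_commute (κ : ℂ) (A : Type*) [Ring A] [Algebra ℂ A]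
    (z d : A) (h : d * z - z * d = 1) :
    let D : A := d ^ 2 + z ^ 3 + algebraMap ℂ A κ
    let P : A := D ^ 2 + 2 * z
    let Q : A := D ^ 3 + algebraMap ℂ A (3 / 2) * (z * D + D * z)
    P * Q = Q * P := by
  intro D P Q
  have two_mul_three_halves : 2 * algebraMap ℂ A (3 / 2) = 3 := by
    rw [← map_ofNat (algebraMap ℂ A) 2, ← map_mul]; norm_num [map_ofNat]
  exact dixmier_commute_of_lie_eq (weyl_lie_cubic_z h (Algebra.commutes κ z))
    (weyl_lie_cubic_d h (Algebra.commutes κ d)) (Algebra.commutes _) two_mul_three_halves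
end

section
/- Let P = aₙ∂ⁿ + aₙ₋₁∂ⁿ⁻¹ + ⋯ + a₀ ∈ ℂ[[z]][∂] with n ≥ 1 and aₙ(0) ≠ 0. Then there exists an automorphism φ of ℂ[[z]][∂] such that φ(P) = ∂ⁿ + bₙ₋₂∂ⁿ⁻² + ⋯ + b₀ for some b₀,…,bₙ₋₂ ∈ ℂ[[z]] (i.e. φ(P) is monic and has vanishing coefficient at ∂ⁿ⁻¹). -/
set_option synthInstance.maxHeartbeats 1000000
set_option maxHeartbeats 1000000

open PowerSeries

/-- The derivative `∂ = d/dz` as a ℂ-linear endomorphism of ℂ[[z]]. -/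
noncomputable def dOp : Module.End ℂ (PowerSeries ℂ) :=
  (PowerSeries.derivative ℂ).toLinearMap

/-- Multiplication by a power series, as a ℂ-linear endomorphism of ℂ[[z]]. -/
noncomputable def mOp (u : PowerSeries ℂ) : Module.End ℂ (PowerSeries ℂ) :=
  LinearMap.mulLeft ℂ u

/-- The algebra 𝔇 = ℂ[[z]][∂] of ordinary differential operators, realized as
the subalgebra of ℂ-linear endomorphisms of ℂ[[z]] generated by `d/dz` and all
multiplication operators. -/
noncomputable def DiffOps : Subalgebra ℂ (Module.End ℂ (PowerSeries ℂ)) :=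
  Algebra.adjoin ℂ (insert dOp (Set.range mOp))

/-- `∂` as an element of 𝔇. -/
noncomputable def Del : DiffOps :=
  ⟨dOp, Algebra.subset_adjoin (Set.mem_insert _ _)⟩

/-- Multiplication by `u ∈ ℂ[[z]]` as an element of 𝔇. -/
noncomputable def Mel (u : PowerSeries ℂ) : DiffOps :=
  ⟨mOp u, Algebra.subset_adjoin (Set.mem_insert_of_mem _ ⟨u, rfl⟩)⟩

/-!
Pick `h` with `hⁿ aₙ = 1` (an `n`-th root exists by Hensel's lemma) and `g` with `g' = h`,
`g(0) = 0`. Substitution `f ↦ f ∘ g` is an automorphism of `ℂ[[z]]` with `(f ∘ g)' = (f' ∘ g) h`,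
so conjugating `𝔇` by its inverse `E` sends `b ↦ E b` and `∂ ↦ E(h) ∂`, and the leading
coefficient of `P` becomes `E(aₙ hⁿ) = 1`. Next, for a unit `u` with `u' = v u` (`u = exp ∫ v`),
conjugation by `u` fixes every `b` and sends `∂ ↦ ∂ + v`; this keeps a monic operator of order `n`
monic and adds `n v` to its coefficient of `∂ⁿ⁻¹`, which vanishes for a suitable `v`.
-/

namespace PowerSeries

variable {K : Type*} [Field K]

lemma exists_derivative_eq [CharZero K] (f : K⟦X⟧) :
    ∃ g : K⟦X⟧, d⁄dX K g = f ∧ constantCoeff g = 0 := by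
  refine ⟨mk fun m => if m = 0 then 0 else coeff (m - 1) f / m, ?_, by simp⟩
  ext n
  have : (n + 1 : K) ≠ 0 := n.cast_add_one_ne_zero
  simp [coeff_derivative, field]

lemma exists_pow_eq [IsAlgClosed K] {n : ℕ} (hn : (n : K) ≠ 0) {a : K⟦X⟧}
    (ha : constantCoeff a ≠ 0) : ∃ r : K⟦X⟧, r ^ n = a := by
  have hn₀ : n ≠ 0 := by rintro rfl; exact hn Nat.cast_zero
  obtain ⟨ζ, hζ⟩ := IsAlgClosed.exists_pow_nat_eq (constantCoeff a) (Nat.pos_of_ne_zero hn₀)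
  have hζ₀ : ζ ≠ 0 := by rintro rfl; exact ha (by rw [← hζ, zero_pow hn₀])
  have hroot : (Polynomial.X ^ n - Polynomial.C a).eval (C ζ) ∈ Ideal.span {(X : K⟦X⟧)} := by
    simp [Ideal.mem_span_singleton, X_dvd_iff, hζ]
  have hsimple : IsUnit (Ideal.Quotient.mk (Ideal.span {(X : K⟦X⟧)})
      ((Polynomial.X ^ n - Polynomial.C a).derivative.eval (C ζ))) := by
    refine IsUnit.map _ (isUnit_iff_constantCoeff.mpr ?_)
    simp [Polynomial.derivative_X_pow, hn, hζ₀]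
  obtain ⟨r, hr, -⟩ := HenselianRing.is_henselian _ (Polynomial.monic_X_pow_sub_C a hn₀) _
    hroot hsimple
  exact ⟨r, sub_eq_zero.mp (by simpa using hr)⟩

lemma exists_unit_derivative_eq_mul [CharZero K] (v : K⟦X⟧) :
    ∃ u : K⟦X⟧ˣ, d⁄dX K u = v * u := by
  obtain ⟨w, hw, hw₀⟩ := exists_derivative_eq v
  have hsubst : HasSubst w := HasSubst.of_constantCoeff_zero' hw₀
  have hunit : IsUnit ((exp K).subst w) := by
    have h := constantCoeff_subst_eq_zero hw₀ (exp K - 1) (by simp [constantCoeff_exp])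
    rw [← coe_substAlgHom hsubst, map_sub, map_one, coe_substAlgHom hsubst, map_sub, map_one,
      sub_eq_zero] at h
    exact isUnit_iff_constantCoeff.mpr (h ▸ isUnit_one)
  refine ⟨hunit.unit, ?_⟩
  rw [IsUnit.unit_spec, derivative_subst hsubst, derivative_exp, hw, mul_comm]

variable {R : Type*} [CommRing R]

noncomputable def substAlgEquiv (g : R⟦X⟧) (hg : constantCoeff g = 0) (hg₁ : IsUnit (coeff 1 g)) :
    R⟦X⟧ ≃ₐ[R] R⟦X⟧ :=
  AlgEquiv.ofAlgHom (substAlgHom (HasSubst.of_constantCoeff_zero' hg))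
    (substAlgHom (HasSubst.substInvOfIsUnit g hg₁))
    (AlgHom.ext fun f => by
      simp [coe_substAlgHom, subst_comp_subst_apply (HasSubst.substInvOfIsUnit g hg₁)
        (HasSubst.of_constantCoeff_zero' hg), subst_substInvOfIsUnit_left g hg hg₁])
    (AlgHom.ext fun f => by
      simp [coe_substAlgHom, subst_comp_subst_apply (HasSubst.of_constantCoeff_zero' hg)
        (HasSubst.substInvOfIsUnit g hg₁), subst_substInvOfIsUnit_right g hg hg₁])

lemma substAlgEquiv_apply (g : R⟦X⟧) (hg : constantCoeff g = 0) (hg₁ : IsUnit (coeff 1 g))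
    (f : R⟦X⟧) : substAlgEquiv g hg hg₁ f = f.subst g :=
  congrFun (coe_substAlgHom (HasSubst.of_constantCoeff_zero' hg)) f

lemma substAlgEquiv_symm_apply (g : R⟦X⟧) (hg : constantCoeff g = 0) (hg₁ : IsUnit (coeff 1 g))
    (f : R⟦X⟧) : (substAlgEquiv g hg hg₁).symm f = f.subst (substInvOfIsUnit g hg₁) :=
  congrFun (coe_substAlgHom (HasSubst.substInvOfIsUnit g hg₁)) f

lemma derivative_substAlgEquiv (g : R⟦X⟧) (hg : constantCoeff g = 0) (hg₁ : IsUnit (coeff 1 g))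
    (f : R⟦X⟧) :
    d⁄dX R (substAlgEquiv g hg hg₁ f) = substAlgEquiv g hg hg₁ (d⁄dX R f) * d⁄dX R g := by
  simp only [substAlgEquiv_apply, derivative_subst (HasSubst.of_constantCoeff_zero' hg)]

lemma derivative_substAlgEquiv_symm (g : R⟦X⟧) (hg : constantCoeff g = 0)
    (hg₁ : IsUnit (coeff 1 g)) (f : R⟦X⟧) :
    d⁄dX R ((substAlgEquiv g hg hg₁).symm f) =
      (substAlgEquiv g hg hg₁).symm (d⁄dX R f) * d⁄dX R (substInvOfIsUnit g hg₁) := by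
  simp only [substAlgEquiv_symm_apply, derivative_subst (HasSubst.substInvOfIsUnit g hg₁)]

end PowerSeries

noncomputable def melHom : PowerSeries ℂ →+* DiffOps where
  toFun := Mel
  map_one' := Subtype.ext <| LinearMap.ext one_mul
  map_mul' a b := Subtype.ext <| LinearMap.ext <| mul_assoc a b
  map_zero' := Subtype.ext <| LinearMap.ext zero_mul
  map_add' a b := Subtype.ext <| LinearMap.ext <| add_mul a b

@[simp] lemma melHom_apply (a : PowerSeries ℂ) : melHom a = Mel a := rfl

@[simp] lemma Mel_zero : Mel 0 = 0 := map_zero melHom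
@[simp] lemma Mel_one : Mel 1 = 1 := map_one melHom
lemma Mel_add (a b : PowerSeries ℂ) : Mel (a + b) = Mel a + Mel b := map_add melHom a b
lemma Mel_mul (a b : PowerSeries ℂ) : Mel (a * b) = Mel a * Mel b := map_mul melHom a b

lemma Del_mul_Mel (a : PowerSeries ℂ) : Del * Mel a = Mel a * Del + Mel (d⁄dX ℂ a) :=
  Subtype.ext <| LinearMap.ext fun f => by
    change d⁄dX ℂ (a * f) = a * d⁄dX ℂ f + d⁄dX ℂ a * f
    rw [Derivation.leibniz, smul_eq_mul, smul_eq_mul, mul_comm f]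

-- Congruences modulo `orderLT m` are stated as `T = S + R` with `R ∈ orderLT m`: negation on
-- `DiffOps` does not unify reducibly with the negation of its `Ring` structure, so `rw` and `simp`
-- cannot use ring lemmas involving `-` there.
noncomputable def orderLT (m : ℕ) : AddSubmonoid DiffOps where
  carrier := {T | ∃ c : ℕ → PowerSeries ℂ, T = ∑ i ∈ Finset.range m, Mel (c i) * Del ^ i}
  zero_mem' := ⟨0, by simp⟩
  add_mem' := by
    rintro _ _ ⟨c, rfl⟩ ⟨c', rfl⟩
    exact ⟨c + c', by simp [Mel_add, add_mul, Finset.sum_add_distrib]⟩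

lemma Mel_mul_Del_pow_mem_orderLT (c : PowerSeries ℂ) {i m : ℕ} (hi : i < m) :
    Mel c * Del ^ i ∈ orderLT m := by
  refine ⟨Pi.single i c, ?_⟩
  rw [Finset.sum_eq_single_of_mem i (Finset.mem_range.mpr hi)]
  · simp
  · intro j _ hj
    simp [hj]

lemma orderLT_mono {m m' : ℕ} (h : m ≤ m') : orderLT m ≤ orderLT m' := by
  rintro _ ⟨c, rfl⟩
  exact (orderLT m').sum_mem fun i hi =>
    Mel_mul_Del_pow_mem_orderLT _ ((Finset.mem_range.mp hi).trans_le h)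

lemma Mel_mul_mem_orderLT (a : PowerSeries ℂ) {m : ℕ} {T : DiffOps} (hT : T ∈ orderLT m) :
    Mel a * T ∈ orderLT m := by
  obtain ⟨c, rfl⟩ := hT
  exact ⟨fun i => a * c i, by simp [Finset.mul_sum, Mel_mul, mul_assoc]⟩

lemma Del_mul_mem_orderLT {m : ℕ} {T : DiffOps} (hT : T ∈ orderLT m) :
    Del * T ∈ orderLT (m + 1) := by
  obtain ⟨c, rfl⟩ := hT
  rw [Finset.mul_sum]
  refine (orderLT (m + 1)).sum_mem fun i hi => ?_
  have hi := Finset.mem_range.mp hi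
  rw [← mul_assoc, Del_mul_Mel, add_mul, mul_assoc, ← pow_succ']
  exact add_mem (Mel_mul_Del_pow_mem_orderLT _ (by omega))
    (Mel_mul_Del_pow_mem_orderLT _ (by omega))

lemma exists_eq_Mel_mul_Del_pow_add_of_mem_orderLT {m : ℕ} {T : DiffOps}
    (hT : T ∈ orderLT (m + 1)) : ∃ c, ∃ R ∈ orderLT m, T = Mel c * Del ^ m + R := by
  obtain ⟨c, rfl⟩ := hT
  exact ⟨c m, _, ⟨c, rfl⟩, by rw [Finset.sum_range_succ, add_comm]⟩

lemma Del_mul_Mel_mul_Del_pow (a : PowerSeries ℂ) (i : ℕ) :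
    Del * (Mel a * Del ^ i) = Mel a * Del ^ (i + 1) + Mel (d⁄dX ℂ a) * Del ^ i := by
  rw [← mul_assoc, Del_mul_Mel, add_mul, mul_assoc, ← pow_succ']

lemma exists_pow_eq_Mel_mul_Del_pow_add (k w : PowerSeries ℂ) (i : ℕ) :
    ∃ R ∈ orderLT i, (Mel k * Del + Mel w) ^ i = Mel (k ^ i) * Del ^ i + R := by
  induction i with
  | zero => exact ⟨0, zero_mem _, by simp⟩
  | succ i ih =>
    obtain ⟨R, hR, hpow⟩ := ih
    refine ⟨Mel (k * d⁄dX ℂ (k ^ i) + w * k ^ i) * Del ^ i + (Mel k * (Del * R) + Mel w * R),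
      add_mem (Mel_mul_Del_pow_mem_orderLT _ i.lt_succ_self)
        (add_mem (Mel_mul_mem_orderLT k (Del_mul_mem_orderLT hR))
          (orderLT_mono i.le_succ (Mel_mul_mem_orderLT w hR))), ?_⟩
    rw [pow_succ', hpow, add_mul, mul_add, mul_add, mul_assoc, Del_mul_Mel_mul_Del_pow]
    simp only [pow_succ', Mel_mul, Mel_add, add_mul, mul_add, mul_assoc]
    abel

lemma exists_Del_add_Mel_pow_eq (v : PowerSeries ℂ) (i : ℕ) :
    ∃ R ∈ orderLT i,
      (Del + Mel v) ^ (i + 1) = Del ^ (i + 1) + Mel ((i + 1 : ℕ) • v) * Del ^ i + R := by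
  induction i with
  | zero => exact ⟨0, zero_mem _, by simp⟩
  | succ i ih =>
    obtain ⟨R, hR, hpow⟩ := ih
    refine ⟨Mel (d⁄dX ℂ ((i + 1 : ℕ) • v) + v * (i + 1 : ℕ) • v) * Del ^ i + (Del * R + Mel v * R),
      add_mem (Mel_mul_Del_pow_mem_orderLT _ i.lt_succ_self)
        (add_mem (Del_mul_mem_orderLT hR) (orderLT_mono i.le_succ (Mel_mul_mem_orderLT v hR))), ?_⟩
    rw [pow_succ', hpow, add_mul, mul_add, mul_add, mul_add, mul_add, Del_mul_Mel_mul_Del_pow,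
      succ_nsmul _ (i + 1)]
    simp only [pow_succ', Mel_mul, Mel_add, add_mul, mul_assoc]
    abel

section Transport

variable {F : Type*} [FunLike F DiffOps DiffOps] [RingHomClass F DiffOps DiffOps] {φ : F}
  {σ : ℂ⟦X⟧ → ℂ⟦X⟧} {k w v c : ℂ⟦X⟧}

lemma exists_map_Mel_mul_Del_pow_eq (hMel : ∀ b, φ (Mel b) = Mel (σ b))
    (hDel : φ Del = Mel k * Del + Mel w) (a : ℂ⟦X⟧) (i : ℕ) :
    ∃ R ∈ orderLT i, φ (Mel a * Del ^ i) = Mel (σ a * k ^ i) * Del ^ i + R := by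
  obtain ⟨R, hR, hpow⟩ := exists_pow_eq_Mel_mul_Del_pow_add k w i
  refine ⟨Mel (σ a) * R, Mel_mul_mem_orderLT _ hR, ?_⟩
  rw [map_mul, map_pow, hMel, hDel, hpow, mul_add, ← mul_assoc, ← Mel_mul]

lemma map_mem_orderLT (hMel : ∀ b, φ (Mel b) = Mel (σ b)) (hDel : φ Del = Mel k * Del + Mel w)
    {m : ℕ} {T : DiffOps} (hT : T ∈ orderLT m) : φ T ∈ orderLT m := by
  obtain ⟨c, rfl⟩ := hT
  rw [map_sum]
  refine (orderLT m).sum_mem fun i hi => ?_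
  obtain ⟨R, hR, hφ⟩ := exists_map_Mel_mul_Del_pow_eq hMel hDel (c i) i
  rw [hφ]
  exact orderLT_mono (Finset.mem_range.mp hi) (add_mem
    (Mel_mul_Del_pow_mem_orderLT _ i.lt_succ_self) (orderLT_mono i.le_succ hR))

lemma exists_map_sum_eq_Del_pow_add (hMel : ∀ b, φ (Mel b) = Mel (σ b))
    (hDel : φ Del = Mel k * Del) (a : ℕ → ℂ⟦X⟧) (m : ℕ)
    (hlead : σ (a (m + 1)) * k ^ (m + 1) = 1) :
    ∃ c, ∃ R ∈ orderLT m, φ (∑ i ∈ Finset.range (m + 1 + 1), Mel (a i) * Del ^ i) =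
      Del ^ (m + 1) + Mel c * Del ^ m + R := by
  have hDel' : φ Del = Mel k * Del + Mel 0 := by rw [Mel_zero, add_zero, hDel]
  obtain ⟨R, hR, htop⟩ := exists_map_Mel_mul_Del_pow_eq hMel hDel' (a (m + 1)) (m + 1)
  have hlow := map_mem_orderLT hMel hDel' (⟨a, rfl⟩ :
    ∑ i ∈ Finset.range (m + 1), Mel (a i) * Del ^ i ∈ orderLT (m + 1))
  obtain ⟨c, R', hR', hcR'⟩ := exists_eq_Mel_mul_Del_pow_add_of_mem_orderLT (add_mem hlow hR)
  refine ⟨c, R', hR', ?_⟩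
  rw [Finset.sum_range_succ, map_add, htop, hlead, Mel_one, one_mul, add_left_comm, ← add_assoc,
    add_assoc _ _ R, hcR', add_assoc]

lemma exists_map_eq_Del_pow_add (hMel : ∀ b, φ (Mel b) = Mel b)
    (hDel : φ Del = Del + Mel v) {m : ℕ} (hv : (m + 1) • v + c = 0) {R : DiffOps}
    (hR : R ∈ orderLT m) :
    ∃ R' ∈ orderLT m, φ (Del ^ (m + 1) + Mel c * Del ^ m + R) = Del ^ (m + 1) + R' := by
  have hMel' : ∀ b, φ (Mel b) = Mel (id b) := hMel
  have hDel' : φ Del = Mel 1 * Del + Mel v := by rw [Mel_one, one_mul, hDel]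
  obtain ⟨R₁, hR₁, hpow⟩ := exists_Del_add_Mel_pow_eq v m
  obtain ⟨R₂, hR₂, hc⟩ := exists_map_Mel_mul_Del_pow_eq hMel' hDel' c m
  have hcancel : Mel ((m + 1) • v) * Del ^ m + Mel c * Del ^ m = 0 := by
    rw [← add_mul, ← Mel_add, hv, Mel_zero, zero_mul]
  refine ⟨R₁ + R₂ + φ R, add_mem (add_mem hR₁ hR₂) (map_mem_orderLT hMel' hDel' hR), ?_⟩
  rw [map_add, map_add, map_pow, hDel, hpow, hc, id, one_pow, mul_one]
  calc _ = Del ^ (m + 1) + (Mel ((m + 1) • v) * Del ^ m + Mel c * Del ^ m) + (R₁ + R₂ + φ R) := by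
        abel
    _ = _ := by rw [hcancel, add_zero]

end Transport

lemma exists_algEquiv_restrict_diffOps (Φ : Module.End ℂ ℂ⟦X⟧ ≃ₐ[ℂ] Module.End ℂ ℂ⟦X⟧)
    (hΦ : ∀ T ∈ insert dOp (Set.range mOp), Φ T ∈ DiffOps)
    (hΦ' : ∀ T ∈ insert dOp (Set.range mOp), Φ.symm T ∈ DiffOps) :
    ∃ φ : DiffOps ≃ₐ[ℂ] DiffOps, ∀ T : DiffOps, (φ T : Module.End ℂ ℂ⟦X⟧) = Φ T := by
  have maps_to (Ψ : Module.End ℂ ℂ⟦X⟧ ≃ₐ[ℂ] Module.End ℂ ℂ⟦X⟧)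
      (hΨ : ∀ T ∈ insert dOp (Set.range mOp), Ψ T ∈ DiffOps) :
      DiffOps ≤ DiffOps.comap (Ψ : Module.End ℂ ℂ⟦X⟧ →ₐ[ℂ] Module.End ℂ ℂ⟦X⟧) :=
    Algebra.adjoin_le hΨ
  have hmap : DiffOps.map (Φ : Module.End ℂ ℂ⟦X⟧ →ₐ[ℂ] Module.End ℂ ℂ⟦X⟧) = DiffOps :=
    le_antisymm (Subalgebra.map_le.mpr (maps_to Φ hΦ))
      fun T hT => ⟨Φ.symm T, maps_to Φ.symm hΦ' hT, Φ.apply_symm_apply T⟩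
  exact ⟨(Φ.subalgebraMap DiffOps).trans (Subalgebra.equivOfEq _ _ hmap), fun _ => rfl⟩

lemma conjAlgEquiv_mOp (E : ℂ⟦X⟧ ≃ₐ[ℂ] ℂ⟦X⟧) (b : ℂ⟦X⟧) :
    E.toLinearEquiv.conjAlgEquiv ℂ (mOp b) = mOp (E b) :=
  LinearMap.ext fun f => by
    change E (b * E.symm f) = E b * f
    rw [map_mul, AlgEquiv.apply_symm_apply]

lemma conjAlgEquiv_dOp {E : ℂ⟦X⟧ ≃ₐ[ℂ] ℂ⟦X⟧} {k : ℂ⟦X⟧}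
    (hE : ∀ f, d⁄dX ℂ (E.symm f) = E.symm (d⁄dX ℂ f) * k) :
    E.toLinearEquiv.conjAlgEquiv ℂ dOp = mOp (E k) * dOp :=
  LinearMap.ext fun f => by
    change E (d⁄dX ℂ (E.symm f)) = E k * d⁄dX ℂ f
    rw [hE, map_mul, AlgEquiv.apply_symm_apply, mul_comm]

theorem exists_algEquiv_of_chain_rule (E : ℂ⟦X⟧ ≃ₐ[ℂ] ℂ⟦X⟧) {k k' : ℂ⟦X⟧}
    (hE : ∀ f, d⁄dX ℂ (E.symm f) = E.symm (d⁄dX ℂ f) * k)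
    (hE' : ∀ f, d⁄dX ℂ (E f) = E (d⁄dX ℂ f) * k') :
    ∃ φ : DiffOps ≃ₐ[ℂ] DiffOps, (∀ b, φ (Mel b) = Mel (E b)) ∧ φ Del = Mel (E k) * Del := by
  have mem_of_conj (F : ℂ⟦X⟧ ≃ₐ[ℂ] ℂ⟦X⟧) {l : ℂ⟦X⟧}
      (hF : ∀ f, d⁄dX ℂ (F.symm f) = F.symm (d⁄dX ℂ f) * l) :
      ∀ T ∈ insert dOp (Set.range mOp), F.toLinearEquiv.conjAlgEquiv ℂ T ∈ DiffOps := by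
    rintro _ (rfl | ⟨b, rfl⟩)
    · rw [conjAlgEquiv_dOp hF]
      exact mul_mem (Mel _).2 Del.2
    · rw [conjAlgEquiv_mOp]
      exact (Mel _).2
  obtain ⟨φ, hφ⟩ := exists_algEquiv_restrict_diffOps (E.toLinearEquiv.conjAlgEquiv ℂ)
    (mem_of_conj E hE) (mem_of_conj E.symm hE')
  exact ⟨φ, fun b => Subtype.ext ((hφ _).trans (conjAlgEquiv_mOp E b)),
    Subtype.ext ((hφ _).trans (conjAlgEquiv_dOp hE))⟩

theorem exists_algEquiv_Del_eq_Del_add_Mel (v : ℂ⟦X⟧) :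
    ∃ φ : DiffOps ≃ₐ[ℂ] DiffOps, (∀ b, φ (Mel b) = Mel b) ∧ φ Del = Del + Mel v := by
  obtain ⟨u, hu⟩ := exists_unit_derivative_eq_mul v
  let φ := MulSemiringAction.toAlgEquiv ℂ DiffOps
    (ConjAct.toConjAct (Units.map (melHom : ℂ⟦X⟧ →* DiffOps) u)⁻¹)
  have hφ (T : DiffOps) : φ T = Mel ↑u⁻¹ * T * Mel u := by
    simp [φ, ConjAct.units_smul_def]
  refine ⟨φ, fun b => ?_, ?_⟩
  · rw [hφ, ← Mel_mul, ← Mel_mul, mul_right_comm, Units.inv_mul, one_mul]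
  · rw [hφ, mul_assoc, Del_mul_Mel, hu, mul_add, ← mul_assoc, ← Mel_mul, ← Mel_mul,
      Units.inv_mul, Mel_one, one_mul, mul_left_comm, Units.inv_mul, mul_one]

theorem exists_algEquiv_leading_coeff_eq_one {a : ℂ⟦X⟧} (ha : constantCoeff a ≠ 0) {n : ℕ}
    (hn : n ≠ 0) : ∃ φ : DiffOps ≃ₐ[ℂ] DiffOps, ∃ E : ℂ⟦X⟧ ≃ₐ[ℂ] ℂ⟦X⟧, ∃ k : ℂ⟦X⟧,
      (∀ b, φ (Mel b) = Mel (E b)) ∧ φ Del = Mel k * Del ∧ E a * k ^ n = 1 := by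
  obtain ⟨h, hh⟩ := exists_pow_eq (Nat.cast_ne_zero.mpr hn) (a := a⁻¹) (by simpa using ha)
  have hha : h ^ n * a = 1 := by rw [hh, PowerSeries.inv_mul_cancel _ ha]
  obtain ⟨g, hg, hg₀⟩ := exists_derivative_eq h
  have hg₁ : IsUnit (coeff 1 g) := by
    have hcoeff : coeff 0 (d⁄dX ℂ g) = coeff 1 g := by simp [coeff_derivative]
    rw [← hcoeff, hg, coeff_zero_eq_constantCoeff]
    exact ((isUnit_pow_iff hn).mp (IsUnit.of_mul_eq_one _ hha)).map constantCoeff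
  obtain ⟨φ, hMel, hDel⟩ := exists_algEquiv_of_chain_rule (substAlgEquiv g hg₀ hg₁).symm
    (derivative_substAlgEquiv g hg₀ hg₁) (derivative_substAlgEquiv_symm g hg₀ hg₁)
  refine ⟨φ, _, _, hMel, hDel, ?_⟩
  rw [← map_pow, ← map_mul, hg, mul_comm, hha, map_one]

/-- Normalization: if `P = aₙ∂ⁿ + ⋯ + a₀ ∈ ℂ[[z]][∂]` with `n ≥ 1` and
`aₙ(0) ≠ 0`, then there is an automorphism `φ` of ℂ[[z]][∂] such that
`φ(P) = ∂ⁿ + bₙ₋₂∂ⁿ⁻² + ⋯ + b₀` for suitable `b₀, …, bₙ₋₂ ∈ ℂ[[z]]`. -/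
theorem normalization_of_operator (n : ℕ) (hn : 1 ≤ n)
    (a : ℕ → PowerSeries ℂ) (ha : PowerSeries.constantCoeff (a n) ≠ 0) :
    ∃ φ : DiffOps ≃ₐ[ℂ] DiffOps, ∃ b : ℕ → PowerSeries ℂ,
      φ (∑ i ∈ Finset.range (n + 1), Mel (a i) * Del ^ i) =
        Del ^ n + ∑ i ∈ Finset.range (n - 1), Mel (b i) * Del ^ i := by
  obtain ⟨m, rfl⟩ : ∃ m, n = m + 1 := ⟨n - 1, by omega⟩
  obtain ⟨φ₁, E, k, hMel₁, hDel₁, hlead⟩ :=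
    exists_algEquiv_leading_coeff_eq_one ha m.succ_ne_zero
  obtain ⟨c, R, hR, hφ₁⟩ := exists_map_sum_eq_Del_pow_add hMel₁ hDel₁ a m hlead
  let v : ℂ⟦X⟧ := -(((m + 1 : ℕ) : ℂ)⁻¹ • c)
  have hv : (m + 1) • v + c = 0 := by
    rw [smul_neg, ← Nat.cast_smul_eq_nsmul ℂ, smul_smul,
      mul_inv_cancel₀ (Nat.cast_ne_zero.mpr m.succ_ne_zero), one_smul, neg_add_cancel]
  obtain ⟨φ₂, hMel₂, hDel₂⟩ := exists_algEquiv_Del_eq_Del_add_Mel v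
  obtain ⟨_, ⟨b, rfl⟩, hφ₂⟩ := exists_map_eq_Del_pow_add hMel₂ hDel₂ hv hR
  exact ⟨φ₁.trans φ₂, b, by rw [AlgEquiv.trans_apply, hφ₁, hφ₂, Nat.add_sub_cancel]⟩
end

section
/- Let R̂ = k[[t², t³]] ⊂ k[[t]], the complete local ring of a cuspidal cubic at its singular point. Every proper nonzero ideal I of R̂ is equal to either I_{n,θ} = ⟨tⁿ(t² + θt³)⟩ for some n ∈ ℕ₀ and θ ∈ k, or J_n = tⁿ·⟨t², t³⟩ for some n ∈ ℕ₀. -/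
open PowerSeries

/-- The ring `R̂ = k[[t²,t³]]`, realized as the subalgebra of `k[[t]]`
consisting of power series with vanishing linear term. -/
def Rhat (k : Type*) [Field k] : Subalgebra k (PowerSeries k) where
  carrier := {f | PowerSeries.coeff (R := k) 1 f = 0}
  add_mem' := fun ha hb => by
    simp only [Set.mem_setOf_eq, map_add] at *
    rw [ha, hb, add_zero]
  mul_mem' := fun ha hb => by
    simp only [Set.mem_setOf_eq] at *
    rw [PowerSeries.coeff_mul, Finset.Nat.antidiagonal_succ]
    simp [ha, hb]
  algebraMap_mem' := fun r => by
    simp [PowerSeries.algebraMap_apply, PowerSeries.coeff_C]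

/-- `tᵐ` as an element of `R̂ = k[[t²,t³]]`, for `m ≠ 1`. -/
noncomputable def tpow (k : Type*) [Field k] (m : ℕ) (hm : m ≠ 1) : Rhat k :=
  ⟨PowerSeries.X ^ m, by
    show PowerSeries.coeff (R := k) 1 (PowerSeries.X ^ m) = 0
    rw [PowerSeries.coeff_X_pow]
    simp [Ne.symm hm]⟩

/-- The generator `tⁿ(t² + θt³) = t^{n+2} + θ·t^{n+3}` of the ideal `I_{n,θ}`. -/
noncomputable def igen (k : Type*) [Field k] (n : ℕ) (θ : k) : Rhat k :=
  tpow k (n + 2) (by omega) + θ • tpow k (n + 3) (by omega)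

/-!
Let `n + 2` be the least order of an element of `I` (orders `0` and `1` are excluded because
`I` is proper and `R̂` has no linear terms), and pick `f ∈ I` of that order. Multiplying `f` by
a unit of `R̂` normalizes it to `t^(n+2) + θ t^(n+3)`. Every element of `I` is divisible by `f`
in `k⟦t⟧`; if all quotients lie in `R̂` then `I = (f)`, and otherwise a quotient `a ∉ R̂`
together with `1` spans `k⟦t⟧` over `R̂`, so `I` is all of `t^(n+2) k⟦t⟧ = (t^(n+2), t^(n+3))`.
-/

namespace PowerSeries

theorem exists_coeff_ne_zero_and_X_pow_dvd {R : Type*} [Semiring R] {S : Set R⟦X⟧}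
    (hS : ∃ φ ∈ S, φ ≠ 0) : ∃ m, (∃ φ ∈ S, coeff m φ ≠ 0) ∧ ∀ φ ∈ S, X ^ m ∣ φ := by
  classical
  have hex : ∃ m, ∃ φ ∈ S, coeff m φ ≠ 0 := by
    obtain ⟨φ, hφ, hφ0⟩ := hS
    obtain ⟨m, hm⟩ := exists_coeff_ne_zero_iff_ne_zero.mpr hφ0
    exact ⟨m, φ, hφ, hm⟩
  refine ⟨Nat.find hex, Nat.find_spec hex, fun φ hφ => X_pow_dvd_iff.mpr fun j hj => ?_⟩
  by_contra h
  exact Nat.find_min hex hj ⟨φ, hφ, h⟩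

theorem coeff_one_inv {k : Type*} [Field k] (φ : k⟦X⟧) :
    coeff 1 φ⁻¹ = -coeff 1 φ / constantCoeff φ ^ 2 := by
  by_cases h : constantCoeff φ = 0
  · simp [inv_eq_zero.mpr h, h]
  · have h1 := congrArg (coeff 1) (PowerSeries.mul_inv_cancel φ h)
    rw [coeff_one_mul, constantCoeff_inv, coeff_one, if_neg one_ne_zero] at h1
    field_simp at h1
    rw [eq_div_iff (pow_ne_zero 2 h)]
    linear_combination h1

end PowerSeries

namespace Rhat

variable {k : Type*} [Field k]

theorem isUnit_of_constantCoeff_ne_zero {x : Rhat k} (h : constantCoeff (x : k⟦X⟧) ≠ 0) :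
    IsUnit x :=
  IsUnit.of_mul_eq_one (b := ⟨(x : k⟦X⟧)⁻¹, by
      show coeff 1 _ = 0
      rw [coeff_one_inv, x.2, neg_zero, zero_div]⟩)
    (Subtype.ext (PowerSeries.mul_inv_cancel _ h))

theorem constantCoeff_eq_zero_of_mem {I : Ideal (Rhat k)} (hI : I ≠ ⊤) {x : Rhat k}
    (hx : x ∈ I) : constantCoeff (x : k⟦X⟧) = 0 :=
  by_contra fun h => hI (I.eq_top_of_isUnit_mem hx (isUnit_of_constantCoeff_ne_zero h))

theorem mem_span_tpow_iff (n : ℕ) (x : Rhat k) :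
    x ∈ Ideal.span {tpow k (n + 2) (by omega), tpow k (n + 3) (by omega)} ↔
      X ^ (n + 2) ∣ (x : k⟦X⟧) := by
  rw [Ideal.mem_span_pair]
  constructor
  · rintro ⟨a, b, rfl⟩
    exact ⟨(a : k⟦X⟧) + (b : k⟦X⟧) * X, by
      simp only [tpow, AddMemClass.coe_add, MulMemClass.coe_mul]
      ring⟩
  · rintro ⟨g, hg⟩
    refine ⟨⟨g - C (coeff 1 g) * X, ?_⟩, algebraMap k _ (coeff 1 g), Subtype.ext ?_⟩
    · show coeff 1 _ = 0
      simp
    · simp only [tpow, MulMemClass.mk_mul_mk, Algebra.algebraMap_eq_smul_one,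
        Algebra.smul_mul_assoc, one_mul, SetLike.mk_smul_mk, smul_eq_C_mul,
        AddMemClass.mk_add_mk, hg]
      ring

theorem exists_associated_igen {f : Rhat k} {n : ℕ} {v : k⟦X⟧} (hv : constantCoeff v ≠ 0)
    (hf : (f : k⟦X⟧) = X ^ (n + 2) * v) : ∃ θ, Associated f (igen k n θ) := by
  set θ := coeff 1 v / constantCoeff v
  let w : Rhat k := ⟨v⁻¹ * (1 + C θ * X), by
    show coeff 1 _ = 0
    rw [coeff_one_mul, coeff_one_inv]
    simp only [map_add, map_mul, constantCoeff_one, constantCoeff_C, constantCoeff_X, mul_zero,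
      add_zero, mul_one, coeff_one, one_ne_zero, ↓reduceIte, coeff_succ_mul_X, coeff_zero_C,
      zero_add, constantCoeff_inv, θ]
    field_simp
    ring⟩
  have hw : IsUnit w := isUnit_of_constantCoeff_ne_zero (by simp [w, hv])
  refine ⟨θ, hw.unit, Subtype.ext ?_⟩
  simp only [w, igen, tpow, hf, MulMemClass.coe_mul, IsUnit.unit_spec, AddMemClass.coe_add,
    SetLike.val_smul, smul_eq_C_mul]
  rw [mul_assoc, ← mul_assoc v, PowerSeries.mul_inv_cancel v hv]
  ring

/-- `R̂` has codimension one in `k⟦X⟧`, so together with any `a ∉ R̂` it spans `k⟦X⟧`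
as an `R̂`-module. -/
theorem mem_span_pair_of_dvd {f h : Rhat k} {a : k⟦X⟧} (ha : coeff 1 a ≠ 0)
    (hh : (h : k⟦X⟧) = f * a) {x : Rhat k} (hx : (f : k⟦X⟧) ∣ x) : x ∈ Ideal.span {f, h} := by
  obtain ⟨p, hp⟩ := hx
  set s := coeff 1 p / coeff 1 a
  refine Ideal.mem_span_pair.mpr ⟨⟨p - C s * a, ?_⟩, algebraMap k _ s, Subtype.ext ?_⟩
  · show coeff 1 _ = 0
    simp [s, ha]
  · simp only [Algebra.algebraMap_eq_smul_one, Algebra.smul_mul_assoc, one_mul,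
      AddMemClass.coe_add, MulMemClass.coe_mul, SetLike.val_smul, hh, smul_eq_C_mul, hp]
    ring

theorem exists_mem_eq_X_pow_mul {I : Ideal (Rhat k)} (h0 : I ≠ ⊥) (h1 : I ≠ ⊤) :
    ∃ n, ∃ f ∈ I, ∃ v : k⟦X⟧, (f : k⟦X⟧) = X ^ (n + 2) * v ∧ constantCoeff v ≠ 0 ∧
      ∀ x ∈ I, X ^ (n + 2) ∣ (x : k⟦X⟧) := by
  obtain ⟨m, ⟨_, ⟨f, hfI, rfl⟩, hfm⟩, hdvd⟩ :=
    exists_coeff_ne_zero_and_X_pow_dvd (S := ((↑) : Rhat k → k⟦X⟧) '' I) <| by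
      obtain ⟨x, hxI, hx0⟩ := Submodule.exists_mem_ne_zero_of_ne_bot h0
      exact ⟨x, ⟨x, hxI, rfl⟩, by simpa using hx0⟩
  obtain ⟨n, rfl⟩ : ∃ n, m = n + 2 := by
    have hm0 : m ≠ 0 := by
      rintro rfl
      exact hfm ((coeff_zero_eq_constantCoeff_apply _).trans (constantCoeff_eq_zero_of_mem h1 hfI))
    have hm1 : m ≠ 1 := by
      rintro rfl
      exact hfm f.2
    exact ⟨m - 2, by omega⟩
  obtain ⟨v, hv⟩ := hdvd f ⟨f, hfI, rfl⟩
  refine ⟨n, f, hfI, v, hv, ?_, fun x hx => hdvd _ ⟨x, hx, rfl⟩⟩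
  rwa [hv, coeff_X_pow_mul', if_pos le_rfl, Nat.sub_self, coeff_zero_eq_constantCoeff] at hfm

theorem eq_span_tpow_of_not_le_span {I : Ideal (Rhat k)} {n : ℕ} {f : Rhat k} {v : k⟦X⟧}
    (hfI : f ∈ I) (hf : (f : k⟦X⟧) = X ^ (n + 2) * v) (hv : constantCoeff v ≠ 0)
    (hdvd : ∀ x ∈ I, X ^ (n + 2) ∣ (x : k⟦X⟧)) (hIf : ¬I ≤ Ideal.span {f}) :
    I = Ideal.span {tpow k (n + 2) (by omega), tpow k (n + 3) (by omega)} := by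
  have hf_dvd : ∀ x : Rhat k, X ^ (n + 2) ∣ (x : k⟦X⟧) → (f : k⟦X⟧) ∣ x := fun x hx => by
    rwa [hf, (isUnit_iff_constantCoeff.mpr hv.isUnit).mul_right_dvd]
  obtain ⟨h, hhI, hhf⟩ := SetLike.not_le_iff_exists.mp hIf
  obtain ⟨a, ha⟩ := hf_dvd h (hdvd h hhI)
  have ha1 : coeff 1 a ≠ 0 := fun ha1 =>
    hhf (Ideal.mem_span_singleton'.mpr ⟨⟨a, ha1⟩, Subtype.ext (by rw [ha]; exact mul_comm _ _)⟩)
  have hfh : Ideal.span {f, h} ≤ I :=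
    Ideal.span_le.mpr (Set.insert_subset hfI (Set.singleton_subset_iff.mpr hhI))
  ext x
  rw [mem_span_tpow_iff]
  exact ⟨hdvd x, fun hx => hfh (mem_span_pair_of_dvd ha1 ha (hf_dvd x hx))⟩

end Rhat

/-- Classification of the proper nonzero ideals of `R̂ = k[[t²,t³]]`: each is
either `I_{n,θ} = ⟨tⁿ(t² + θt³)⟩` for some `n ∈ ℕ`, `θ ∈ k`, or
`J_n = tⁿ·⟨t²,t³⟩ = ⟨t^{n+2}, t^{n+3}⟩` for some `n ∈ ℕ`. -/
theorem ideals_of_cusp (k : Type*) [Field k]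
    (I : Ideal (Rhat k)) (h0 : I ≠ ⊥) (h1 : I ≠ ⊤) :
    (∃ (n : ℕ) (θ : k), I = Ideal.span {igen k n θ}) ∨
    (∃ n : ℕ, I = Ideal.span
      {tpow k (n + 2) (by omega), tpow k (n + 3) (by omega)}) := by
  obtain ⟨n, f, hfI, v, hf, hv, hdvd⟩ := Rhat.exists_mem_eq_X_pow_mul h0 h1
  by_cases hIf : I ≤ Ideal.span {f}
  · obtain ⟨θ, u, hu⟩ := Rhat.exists_associated_igen hv hf
    refine Or.inl ⟨n, θ, ?_⟩
    rw [← hu, Ideal.span_singleton_mul_right_unit u.isUnit]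
    exact le_antisymm hIf ((Ideal.span_singleton_le_iff_mem I).mpr hfI)
  · exact Or.inr ⟨n, Rhat.eq_span_tpow_of_not_le_span hfI hf hv hdvd hIf⟩
end

section
/- Let R̂ = k[[u,v]]/(v² − u³) and let M be an indecomposable R̂-module with dim_k M = 3. Then M is isomorphic to exactly one of: (1) M_θ = R̂/(t³ + θt⁴) for some θ ∈ k (realized via R̂ ≅ k[[t²,t³]]); (2) N = R̂/(t⁴, t⁵); (3) the Matlis dual N^♯ of N. -/
/-!
Since `U` is nilpotent of size three, `U ^ 3 = 0`, hence `V ^ 2 = 0`. If `U ^ 2 ≠ 0`, a vector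
`x` with `U ^ 2 x ≠ 0` gives the basis `(U ^ 2 x, U x, x)` in which `U` is the Jordan block `J`;
a square-zero matrix commuting with `J` is a multiple of `J ^ 2 = E₁₃`. If `U ^ 2 = 0 ≠ U`, a basis
adapted to `ker U ⊇ im U` turns `U` into `E₁₂`, and then `V` into a square-zero matrix commuting
with `E₁₂`, i.e. `!![0, b, c; 0, 0, 0; 0, d, 0]` with `c d = 0`; indecomposability excludes
`c = d = 0`, and the cases `d ≠ 0` and `c ≠ 0` are conjugate to `N` and to `N^♯`. If `U = 0`, the
idempotent `diag(1, 1, 0)` decomposes the module. The three normal forms are told apart by two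
conjugation invariants: whether `U ^ 2 = 0`, and whether `V` is a left multiple of `U`.
-/

/-- Simultaneous conjugacy of pairs of 3×3 matrices: the module given by the
pair `(U, V)` is isomorphic to the module given by `(U', V')`. -/
def SimConj {k : Type*} [Field k] (U V U' V' : Matrix (Fin 3) (Fin 3) k) : Prop :=
  ∃ S : GL (Fin 3) k,
    U' = (S : Matrix (Fin 3) (Fin 3) k) * U * ((S⁻¹ : GL (Fin 3) k) : Matrix (Fin 3) (Fin 3) k) ∧
    V' = (S : Matrix (Fin 3) (Fin 3) k) * V * ((S⁻¹ : GL (Fin 3) k) : Matrix (Fin 3) (Fin 3) k)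

open Matrix Module

local notation "J₃" => !![0, 1, 0; 0, 0, 1; 0, 0, 0]
local notation "E₁₂" => !![0, 1, 0; 0, 0, 0; 0, 0, 0]
local notation "E₁₃" => !![0, 0, 1; 0, 0, 0; 0, 0, 0]
local notation "E₂₁" => !![0, 0, 0; 1, 0, 0; 0, 0, 0]
local notation "E₃₁" => !![0, 0, 0; 0, 0, 0; 1, 0, 0]
local notation "D₁₂" => !![1, 0, 0; 0, 1, 0; 0, 0, 0]

theorem Matrix.pow_card_eq_zero_of_isNilpotent {n R : Type*} [Fintype n] [DecidableEq n]
    [CommRing R] [IsDomain R] {M : Matrix n n R} (hM : IsNilpotent M) :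
    M ^ Fintype.card n = 0 := by
  have hχ : M.charpoly = Polynomial.X ^ Fintype.card n :=
    sub_eq_zero.1 (isNilpotent_charpoly_sub_pow_of_isNilpotent hM).eq_zero
  simpa [hχ] using M.aeval_self_charpoly

section NormalForm

variable {K V : Type*} [Field K] [AddCommGroup V] [Module K V]

theorem LinearMap.toMatrix_eq_of_apply_basis {ι : Type*} [Fintype ι] [DecidableEq ι]
    (b : Basis ι K V) (f : V →ₗ[K] V) (N : Matrix ι ι K)
    (h : ∀ j, f (b j) = ∑ i, N i j • b i) : LinearMap.toMatrix b b f = N := by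
  rw [← LinearMap.toMatrix_toLin b b N]
  exact congrArg _ (b.ext fun j => (h j).trans (Matrix.toLin_self b b N j).symm)

theorem Matrix.exists_mul_eq_mul_toMatrix {ι : Type*} [Fintype ι] [DecidableEq ι]
    (M : Matrix ι ι K) (b : Basis ι K (ι → K)) :
    ∃ P : GL ι K, M * P.val = P.val * LinearMap.toMatrix b b (toLinAlgEquiv' M) := by
  let e := Pi.basisFun K ι
  have hM : LinearMap.toMatrix e e (toLinAlgEquiv' M) = M := by
    rw [LinearMap.toMatrix_eq_toMatrix']
    exact LinearMap.toMatrix'_toLin' M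
  refine ⟨⟨e.toMatrix b, b.toMatrix e, e.toMatrix_mul_toMatrix_flip b,
    b.toMatrix_mul_toMatrix_flip e⟩, ?_⟩
  change M * e.toMatrix b = e.toMatrix b * _
  conv_lhs => rw [← hM]
  rw [basis_toMatrix_mul_linearMap_toMatrix, linearMap_toMatrix_mul_basis_toMatrix]

theorem LinearMap.linearIndependent_iterate_three {f : V →ₗ[K] V} {x : V} (h2 : f (f x) ≠ 0)
    (h3 : f (f (f x)) = 0) : LinearIndependent K ![f (f x), f x, x] := by
  rw [Fintype.linearIndependent_iff]
  intro g hg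
  simp only [Fin.sum_univ_three, Matrix.cons_val] at hg
  have hfg := congrArg f hg
  have hffg := congrArg f hfg
  simp only [map_add, map_smul, h3, smul_zero, zero_add, map_zero] at hfg hffg
  have g2 : g 2 = 0 := (smul_eq_zero.1 hffg).resolve_right h2
  simp only [g2, zero_smul, add_zero] at hfg hg
  have g1 : g 1 = 0 := (smul_eq_zero.1 hfg).resolve_right h2
  simp only [g1, zero_smul, add_zero] at hg
  have g0 : g 0 = 0 := (smul_eq_zero.1 hg).resolve_right h2
  intro i
  fin_cases i <;> assumption

theorem LinearMap.linearIndependent_apply_self_ker {f : V →ₗ[K] V} {x z : V} (hx : f x ≠ 0)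
    (h2 : f (f x) = 0) (hz : f z = 0) (hzx : z ∉ K ∙ f x) :
    LinearIndependent K ![f x, x, z] := by
  rw [Fintype.linearIndependent_iff]
  intro g hg
  simp only [Fin.sum_univ_three, Matrix.cons_val] at hg
  have hfg := congrArg f hg
  simp only [map_add, map_smul, h2, hz, smul_zero, zero_add, add_zero, map_zero] at hfg
  have g1 : g 1 = 0 := (smul_eq_zero.1 hfg).resolve_right hx
  simp only [g1, zero_smul, add_zero] at hg
  have g2 : g 2 = 0 := by
    by_contra hg2
    refine hzx (Submodule.mem_span_singleton.2 ⟨-(g 2)⁻¹ * g 0, ?_⟩)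
    rw [mul_smul, neg_smul, ← smul_neg, neg_eq_of_add_eq_zero_right hg, inv_smul_smul₀ hg2]
  simp only [g2, zero_smul, add_zero] at hg
  have g0 : g 0 = 0 := (smul_eq_zero.1 hg).resolve_right hx
  intro i
  fin_cases i <;> assumption

theorem Module.End.exists_basis_toMatrix_eq_jordan (hV : finrank K V = 3) {f : Module.End K V}
    (h3 : f ^ 3 = 0) (h2 : f ^ 2 ≠ 0) : ∃ b : Basis (Fin 3) K V, LinearMap.toMatrix b b f = J₃ := by
  obtain ⟨x, hx⟩ := DFunLike.ne_iff.1 h2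
  have hx3 : f (f (f x)) = 0 := by simpa [pow_succ] using LinearMap.congr_fun h3 x
  rw [sq, Module.End.mul_apply, LinearMap.zero_apply] at hx
  refine ⟨basisOfLinearIndependentOfCardEqFinrank (f.linearIndependent_iterate_three hx hx3)
    (by simp [hV]), LinearMap.toMatrix_eq_of_apply_basis _ _ _ fun j => ?_⟩
  fin_cases j <;> simp [Fin.sum_univ_three, hx3]

theorem Module.End.exists_basis_toMatrix_eq_E₁₂ (hV : finrank K V = 3) {f : Module.End K V}
    (h1 : f ≠ 0) (h2 : f ^ 2 = 0) : ∃ b : Basis (Fin 3) K V, LinearMap.toMatrix b b f = E₁₂ := by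
  have : FiniteDimensional K V := .of_finrank_pos (by omega)
  obtain ⟨x, hx⟩ := DFunLike.ne_iff.1 h1
  have hx2 : f (f x) = 0 := by simpa [sq] using LinearMap.congr_fun h2 x
  have hker : 2 ≤ finrank K (LinearMap.ker f) := by
    have hle : LinearMap.range f ≤ LinearMap.ker f :=
      LinearMap.range_le_ker_iff.2 (by rw [← Module.End.mul_eq_comp, ← sq, h2])
    have := Submodule.finrank_mono hle
    have := LinearMap.finrank_range_add_finrank_ker f
    omega
  obtain ⟨z, hz, hzx⟩ : ∃ z ∈ LinearMap.ker f, z ∉ K ∙ f x := by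
    refine SetLike.exists_of_lt (Submodule.lt_of_le_of_finrank_lt_finrank ?_ ?_)
    · exact (Submodule.span_singleton_le_iff_mem _ _).2 hx2
    · rw [finrank_span_singleton hx]
      omega
  refine ⟨basisOfLinearIndependentOfCardEqFinrank (f.linearIndependent_apply_self_ker hx hx2 hz hzx)
    (by simp [hV]), LinearMap.toMatrix_eq_of_apply_basis _ _ _ fun j => ?_⟩
  fin_cases j <;> simp [Fin.sum_univ_three, hx2, LinearMap.mem_ker.1 hz]

theorem Matrix.exists_mul_eq_mul_jordan {M : Matrix (Fin 3) (Fin 3) K} (h3 : M ^ 3 = 0)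
    (h2 : M ^ 2 ≠ 0) : ∃ P : GL (Fin 3) K, M * P.val = P.val * J₃ := by
  obtain ⟨b, hb⟩ := Module.End.exists_basis_toMatrix_eq_jordan (f := toLinAlgEquiv' M) (by simp)
    (by rw [← map_pow, h3, map_zero]) (by rwa [← map_pow, map_ne_zero_iff _ (AlgEquiv.injective _)])
  rw [← hb]
  exact exists_mul_eq_mul_toMatrix M b

theorem Matrix.exists_mul_eq_mul_E₁₂ {M : Matrix (Fin 3) (Fin 3) K} (h1 : M ≠ 0)
    (h2 : M ^ 2 = 0) : ∃ P : GL (Fin 3) K, M * P.val = P.val * E₁₂ := by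
  obtain ⟨b, hb⟩ := Module.End.exists_basis_toMatrix_eq_E₁₂ (f := toLinAlgEquiv' M) (by simp)
    (by rwa [map_ne_zero_iff _ (AlgEquiv.injective _)]) (by rw [← map_pow, h2, map_zero])
  rw [← hb]
  exact exists_mul_eq_mul_toMatrix M b

end NormalForm

def IsIndecomposablePair {R : Type*} [Semiring R] (U V : R) : Prop :=
  ∀ E : R, IsIdempotentElem E → Commute E U → Commute E V → E = 0 ∨ E = 1

theorem IsIndecomposablePair.map {R S : Type*} [Semiring R] [Semiring S] {U V : R}
    (h : IsIndecomposablePair U V) (σ : R ≃+* S) : IsIndecomposablePair (σ U) (σ V) := by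
  intro E hE hEU hEV
  simpa using h (σ.symm E) (hE.map σ.symm) (by simpa using hEU.map σ.symm)
    (by simpa using hEV.map σ.symm)

namespace SimConj

variable {k : Type*} [Field k] {U V U' V' U'' V'' : Matrix (Fin 3) (Fin 3) k}

theorem exists_ringEquiv (h : SimConj U V U' V') :
    ∃ σ : Matrix (Fin 3) (Fin 3) k ≃+* Matrix (Fin 3) (Fin 3) k, σ U = U' ∧ σ V = V' := by
  obtain ⟨S, rfl, rfl⟩ := h
  exact ⟨MulSemiringAction.toRingEquiv _ _ (ConjAct.toConjAct S), rfl, rfl⟩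

theorem of_mul_eq (P : GL (Fin 3) k) (hU : U * P.val = P.val * U')
    (hV : V * P.val = P.val * V') : SimConj U V U' V' :=
  ⟨P⁻¹, by rw [inv_inv, mul_assoc, hU, ← mul_assoc, P.inv_mul, one_mul],
    by rw [inv_inv, mul_assoc, hV, ← mul_assoc, P.inv_mul, one_mul]⟩

theorem trans (h : SimConj U V U' V') (h' : SimConj U' V' U'' V'') : SimConj U V U'' V'' := by
  obtain ⟨S, rfl, rfl⟩ := h
  obtain ⟨T, rfl, rfl⟩ := h'
  exact ⟨T * S, by simp [mul_assoc], by simp [mul_assoc]⟩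

theorem isIndecomposablePair (h : SimConj U V U' V') (hind : IsIndecomposablePair U V) :
    IsIndecomposablePair U' V' := by
  obtain ⟨σ, rfl, rfl⟩ := h.exists_ringEquiv
  exact hind.map σ

theorem sq_eq_zero_iff (h : SimConj U V U' V') : U ^ 2 = 0 ↔ U' ^ 2 = 0 := by
  obtain ⟨σ, rfl, rfl⟩ := h.exists_ringEquiv
  rw [← map_pow, map_eq_zero_iff σ σ.injective]

theorem exists_mul_eq_iff (h : SimConj U V U' V') :
    (∃ X, V = X * U) ↔ ∃ X, V' = X * U' := by
  obtain ⟨σ, rfl, rfl⟩ := h.exists_ringEquiv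
  refine ⟨fun ⟨X, hX⟩ => ⟨σ X, by rw [hX, map_mul]⟩, fun ⟨X, hX⟩ => ⟨σ.symm X, σ.injective ?_⟩⟩
  rw [hX, map_mul, σ.apply_symm_apply]

end SimConj

section Classification

variable {k : Type*} [Field k] {U V : Matrix (Fin 3) (Fin 3) k}

theorem eq_smul_of_commute_jordan {W : Matrix (Fin 3) (Fin 3) k} (hW : Commute W J₃)
    (hW2 : W ^ 2 = 0) : W = W 0 2 • E₁₃ := by
  obtain ⟨a, b, c, d, e, f, g, h, i, rfl⟩ : ∃ a b c d e f g h i,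
      W = !![a, b, c; d, e, f; g, h, i] := ⟨_, _, _, _, _, _, _, _, _, eta_fin_three W⟩
  obtain ⟨rfl, rfl, rfl, rfl, rfl, rfl⟩ : d = 0 ∧ g = 0 ∧ h = 0 ∧ a = e ∧ b = f ∧ a = i := by
    simp [Commute, SemiconjBy] at hW
    grind
  obtain ⟨rfl, rfl⟩ : a = 0 ∧ b = 0 := by
    simp [sq, ← Matrix.ext_iff, Fin.forall_fin_succ] at hW2
    grind
  simp

theorem exists_eq_of_commute_E₁₂ {W : Matrix (Fin 3) (Fin 3) k} (hW : Commute W E₁₂)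
    (hW2 : W ^ 2 = 0) : ∃ b c d : k, c * d = 0 ∧ W = !![0, b, c; 0, 0, 0; 0, d, 0] := by
  obtain ⟨a, b, c, d, e, f, g, h, i, rfl⟩ : ∃ a b c d e f g h i,
      W = !![a, b, c; d, e, f; g, h, i] := ⟨_, _, _, _, _, _, _, _, _, eta_fin_three W⟩
  obtain ⟨rfl, rfl, rfl, rfl⟩ : d = 0 ∧ f = 0 ∧ g = 0 ∧ a = e := by
    simp [Commute, SemiconjBy] at hW
    grind
  obtain ⟨rfl, rfl, hch⟩ : a = 0 ∧ i = 0 ∧ c * h = 0 := by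
    simp [sq, ← Matrix.ext_iff, Fin.forall_fin_succ] at hW2
    grind
  exact ⟨b, c, h, hch, rfl⟩

theorem not_isIndecomposablePair_of_commute (hU : Commute D₁₂ U) (hV : Commute D₁₂ V) :
    ¬IsIndecomposablePair U V := fun h => by
  rcases h _ (by ext i j; fin_cases i <;> fin_cases j <;> simp) hU hV with h | h
  · simpa using congrFun₂ h 0 0
  · simpa using congrFun₂ h 2 2

theorem commute_D₁₂_smul_E₁₂ (b : k) : Commute D₁₂ !![0, b, 0; 0, 0, 0; 0, 0, 0] := by
  ext i j; fin_cases i <;> fin_cases j <;> simp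

theorem not_isIndecomposablePair_zero_left (hV2 : V ^ 2 = 0) : ¬IsIndecomposablePair 0 V := by
  by_cases hV : V = 0
  · subst hV
    exact not_isIndecomposablePair_of_commute (.zero_right _) (.zero_right _)
  obtain ⟨P, hP⟩ := exists_mul_eq_mul_E₁₂ hV hV2
  exact fun hind => not_isIndecomposablePair_of_commute (.zero_right _) (commute_D₁₂_smul_E₁₂ 1)
    ((SimConj.of_mul_eq P (U' := 0) (by simp) hP).isIndecomposablePair hind)

theorem simConj_E₂₁_or_E₁₂_of_E₁₂ {b c d : k} (hcd : c * d = 0)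
    (hind : IsIndecomposablePair E₁₂ !![0, b, c; 0, 0, 0; 0, d, 0]) :
    SimConj E₁₂ !![0, b, c; 0, 0, 0; 0, d, 0] E₂₁ E₃₁ ∨
      SimConj E₁₂ !![0, b, c; 0, 0, 0; 0, d, 0] E₁₂ E₁₃ := by
  by_cases hd : d = 0
  · subst hd
    by_cases hc : c = 0
    · subst hc
      exact absurd hind (not_isIndecomposablePair_of_commute
        (commute_D₁₂_smul_E₁₂ 1) (commute_D₁₂_smul_E₁₂ b))
    right
    have hQ : IsUnit !![c, 0, 0; 0, c, 0; 0, -b, 1] := by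
      simp [isUnit_iff_isUnit_det, det_fin_three, hc]
    refine SimConj.of_mul_eq hQ.unit ?_ ?_ <;>
      (ext i j; fin_cases i <;> fin_cases j <;> simp [mul_comm])
  · left
    obtain rfl : c = 0 := (mul_eq_zero.1 hcd).resolve_right hd
    have hQ : IsUnit !![0, 1, b; 1, 0, 0; 0, 0, d] := by
      simp [isUnit_iff_isUnit_det, det_fin_three, hd]
    refine SimConj.of_mul_eq hQ.unit ?_ ?_ <;>
      (ext i j; fin_cases i <;> fin_cases j <;> simp)

theorem exists_simConj_jordan (hUV : Commute U V) (hU3 : U ^ 3 = 0) (hU2 : U ^ 2 ≠ 0)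
    (hV2 : V ^ 2 = 0) : ∃ θ : k, SimConj U V J₃ (θ • E₁₃) := by
  obtain ⟨P, hP⟩ := exists_mul_eq_mul_jordan hU3 hU2
  have h : SimConj U V J₃ ((P⁻¹).val * V * P.val) := SimConj.of_mul_eq P hP (by simp [mul_assoc])
  obtain ⟨σ, hσU, hσV⟩ := h.exists_ringEquiv
  refine ⟨((P⁻¹).val * V * P.val) 0 2, ?_⟩
  rwa [← eq_smul_of_commute_jordan (by rw [← hσU, ← hσV]; exact (hUV.map σ).symm)
    (by rw [← hσV, ← map_pow, hV2, map_zero])]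

theorem simConj_E₂₁_or_E₁₂ (hUV : Commute U V) (hU : U ≠ 0) (hU2 : U ^ 2 = 0) (hV2 : V ^ 2 = 0)
    (hind : IsIndecomposablePair U V) : SimConj U V E₂₁ E₃₁ ∨ SimConj U V E₁₂ E₁₃ := by
  obtain ⟨P, hP⟩ := exists_mul_eq_mul_E₁₂ hU hU2
  have h : SimConj U V E₁₂ ((P⁻¹).val * V * P.val) := SimConj.of_mul_eq P hP (by simp [mul_assoc])
  obtain ⟨σ, hσU, hσV⟩ := h.exists_ringEquiv
  obtain ⟨b, c, d, hcd, hW⟩ := exists_eq_of_commute_E₁₂ (W := (P⁻¹).val * V * P.val)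
    (by rw [← hσU, ← hσV]; exact (hUV.map σ).symm) (by rw [← hσV, ← map_pow, hV2, map_zero])
  rw [hW] at h
  exact (simConj_E₂₁_or_E₁₂_of_E₁₂ hcd (h.isIndecomposablePair hind)).imp h.trans h.trans

theorem jordan_sq_ne_zero : (J₃ : Matrix (Fin 3) (Fin 3) k) ^ 2 ≠ 0 := fun h => by
  simpa [sq] using congrFun₂ h 0 2

theorem E₂₁_sq_eq_zero : (E₂₁ : Matrix (Fin 3) (Fin 3) k) ^ 2 = 0 := by
  ext i j; fin_cases i <;> fin_cases j <;> simp [sq]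

theorem E₁₂_sq_eq_zero : (E₁₂ : Matrix (Fin 3) (Fin 3) k) ^ 2 = 0 := by
  ext i j; fin_cases i <;> fin_cases j <;> simp [sq]

theorem exists_E₃₁_eq_mul_E₂₁ : ∃ X : Matrix (Fin 3) (Fin 3) k, E₃₁ = X * E₂₁ :=
  ⟨!![0, 0, 0; 0, 0, 0; 0, 1, 0], by ext i j; fin_cases i <;> fin_cases j <;> simp⟩

theorem not_exists_E₁₃_eq_mul_E₁₂ : ¬∃ X : Matrix (Fin 3) (Fin 3) k, E₁₃ = X * E₁₂ :=
  fun ⟨X, hX⟩ => by simpa [mul_apply, Fin.sum_univ_three] using congrFun₂ hX 0 2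

end Classification

/-- The normal forms `(J, θ • E₁₃)`, `(E₂₁, E₃₁)` and `(E₁₂, E₁₃)` are the modules `M_θ`, `N` and
`N^♯`; indecomposability is stated as: `0` and `1` are the only idempotents commuting with `U`
and `V`. -/
theorem indecomposable_dim_three_classification_general (k : Type*) [Field k]
    (U V : Matrix (Fin 3) (Fin 3) k)
    (hcomm : U * V = V * U) (hU : IsNilpotent U)
    (hrel : V ^ 2 = U ^ 3)
    (hind : ∀ E : Matrix (Fin 3) (Fin 3) k,
      E * E = E → E * U = U * E → E * V = V * E → E = 0 ∨ E = 1) :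
    let A : Prop := ∃ θ : k,
      SimConj U V !![0, 1, 0; 0, 0, 1; 0, 0, 0] (θ • !![0, 0, 1; 0, 0, 0; 0, 0, 0])
    let B : Prop :=
      SimConj U V !![0, 0, 0; 1, 0, 0; 0, 0, 0] !![0, 0, 0; 0, 0, 0; 1, 0, 0]
    let C : Prop :=
      SimConj U V !![0, 1, 0; 0, 0, 0; 0, 0, 0] !![0, 0, 1; 0, 0, 0; 0, 0, 0]
    (A ∨ B ∨ C) ∧ ¬(A ∧ B) ∧ ¬(A ∧ C) ∧ ¬(B ∧ C) := by
  intro A B C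
  have hU3 : U ^ 3 = 0 := by simpa using pow_card_eq_zero_of_isNilpotent hU
  have hV2 : V ^ 2 = 0 := hrel.trans hU3
  refine ⟨?_, ?_, ?_, ?_⟩
  · by_cases hU2 : U ^ 2 = 0
    · by_cases hU0 : U = 0
      · subst hU0
        exact absurd hind (not_isIndecomposablePair_zero_left hV2)
      · exact .inr (simConj_E₂₁_or_E₁₂ hcomm hU0 hU2 hV2 hind)
    · exact .inl (exists_simConj_jordan hcomm hU3 hU2 hV2)
  · rintro ⟨⟨_, hA⟩, hB⟩
    exact jordan_sq_ne_zero (hA.sq_eq_zero_iff.1 (hB.sq_eq_zero_iff.2 E₂₁_sq_eq_zero))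
  · rintro ⟨⟨_, hA⟩, hC⟩
    exact jordan_sq_ne_zero (hA.sq_eq_zero_iff.1 (hC.sq_eq_zero_iff.2 E₁₂_sq_eq_zero))
  · rintro ⟨hB, hC⟩
    exact not_exists_E₁₃_eq_mul_E₁₂
      (hC.exists_mul_eq_iff.1 (hB.exists_mul_eq_iff.2 exists_E₃₁_eq_mul_E₂₁))

/-- Classification of indecomposable 3-dimensional modules over
`R̂ = k[[u,v]]/(v² − u³)`.  Such a module is a pair of commuting nilpotent
matrices `U, V ∈ Mat₃(k)` with `V² = U³`; indecomposability says the only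
idempotent matrices commuting with `U` and `V` are `0` and `1`.  Then the pair
is simultaneously conjugate to exactly one of:
(1) `(J, θ·E₁₃)` for some `θ ∈ k` — the module `M_θ = R̂/(t³ + θ't⁴)`;
(2) `(E₂₁, E₃₁)` — the module `N = R̂/(t⁴,t⁵)`;
(3) `(E₁₂, E₁₃)` — the Matlis dual `N^♯` (transposed matrices). -/
theorem indecomposable_dim_three_classification (k : Type*) [Field k]
    [IsAlgClosed k] [CharZero k] (U V : Matrix (Fin 3) (Fin 3) k)
    (hcomm : U * V = V * U) (hU : IsNilpotent U) (hV : IsNilpotent V)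
    (hrel : V ^ 2 = U ^ 3)
    (hind : ∀ E : Matrix (Fin 3) (Fin 3) k,
      E * E = E → E * U = U * E → E * V = V * E → E = 0 ∨ E = 1) :
    let A : Prop := ∃ θ : k,
      SimConj U V !![0, 1, 0; 0, 0, 1; 0, 0, 0] (θ • !![0, 0, 1; 0, 0, 0; 0, 0, 0])
    let B : Prop :=
      SimConj U V !![0, 0, 0; 1, 0, 0; 0, 0, 0] !![0, 0, 0; 0, 0, 0; 1, 0, 0]
    let C : Prop :=
      SimConj U V !![0, 1, 0; 0, 0, 0; 0, 0, 0] !![0, 0, 1; 0, 0, 0; 0, 0, 0]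
    (A ∨ B ∨ C) ∧ ¬(A ∧ B) ∧ ¬(A ∧ C) ∧ ¬(B ∧ C) :=
  indecomposable_dim_three_classification_general k U V hcomm hU hrel hind
end

section
/- Let g ∈ ℂ[[z]] be nonzero. The Laurent series h = (2gg'' − (g')²)/g² is regular at z = 0 (i.e. lies in ℂ[[z]]) if and only if either g(0) ≠ 0, or g = z²·g̃ with g̃ ∈ ℂ[[z]], g̃(0) ≠ 0 and g̃'(0) = 0. -/
/-!
Write `g = X ^ n * u` with `u(0) ≠ 0`. The Euler operator `X • d/dX` acts on `X ^ n * u` as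
`X ^ n * (n + X • d/dX) u`, which gives
`X² (2gg'' - g'²) = X^(2n) (n(n-2) u² + 2n X u u' + X² (2uu'' - u'²))`
(multiplying by `X²` keeps the exponents of `X` out of truncated subtraction).
Hence `g²` divides `2gg'' - g'²` iff `X²` divides the bracket, i.e. iff
`n(n-2) u(0)² = 0` and `2n(n-1) u(0) u'(0) = 0`, i.e. iff `n = 0`, or `n = 2` and `u'(0) = 0`.
-/

open PowerSeries

namespace PowerSeries

section CommSemiring

variable {R : Type*} [CommSemiring R]

theorem exists_eq_X_pow_mul_of_ne_zero {f : R⟦X⟧} (hf : f ≠ 0) :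
    ∃ (n : ℕ) (u : R⟦X⟧), constantCoeff u ≠ 0 ∧ f = X ^ n * u :=
  ⟨_, _, constantCoeff_divXPowOrder_eq_zero_iff.not.2 hf, X_pow_order_mul_divXPowOrder.symm⟩

theorem order_X_pow_mul_of_constantCoeff_ne_zero {u : R⟦X⟧} (hu : constantCoeff u ≠ 0)
    (n : ℕ) : order (X ^ n * u) = n :=
  order_eq_nat.2 ⟨by simpa [coeff_X_pow_mul'] using hu,
    fun i hi => by simp [coeff_X_pow_mul', hi.not_ge]⟩

theorem X_pow_mul_eq_X_pow_mul_iff {u v : R⟦X⟧} (hu : constantCoeff u ≠ 0)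
    (hv : constantCoeff v ≠ 0) {m n : ℕ} : X ^ m * u = X ^ n * v ↔ m = n ∧ u = v := by
  refine ⟨fun h => ?_, fun ⟨hmn, huv⟩ => hmn ▸ huv ▸ rfl⟩
  have hmn : m = n := by
    simpa [order_X_pow_mul_of_constantCoeff_ne_zero hu,
      order_X_pow_mul_of_constantCoeff_ne_zero hv] using congrArg order h
  subst hmn
  exact ⟨rfl, X_pow_mul_cancel h⟩

theorem X_sq_dvd_iff {f : R⟦X⟧} : X ^ 2 ∣ f ↔ coeff 0 f = 0 ∧ coeff 1 f = 0 := by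
  simp [X_pow_dvd_iff, Nat.le_one_iff_eq_zero_or_eq_one, or_imp, forall_and]

theorem X_mul_derivative_X_mul (f : R⟦X⟧) :
    X * d⁄dX R (X * f) = X * f + X ^ 2 * d⁄dX R f := by
  rw [Derivation.leibniz, derivative_X, smul_eq_mul, smul_eq_mul]
  ring

theorem X_mul_derivative_X_pow_mul (n : ℕ) (u : R⟦X⟧) :
    X * d⁄dX R (X ^ n * u) = X ^ n * ((n : R⟦X⟧) * u + X * d⁄dX R u) := by
  induction n with
  | zero => simp
  | succ n ih =>
    rw [pow_succ', mul_assoc, X_mul_derivative_X_mul, sq, mul_assoc, ih]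
    push_cast
    ring

end CommSemiring

section CommRing

variable {R : Type*} [CommRing R]

noncomputable def quadDiff (f : R⟦X⟧) : R⟦X⟧ :=
  2 * f * d⁄dX R (d⁄dX R f) - d⁄dX R f ^ 2

theorem X_sq_mul_derivative_derivative_X_pow_mul (n : ℕ) (u : R⟦X⟧) :
    X ^ 2 * d⁄dX R (d⁄dX R (X ^ n * u)) = X ^ n * ((n : R⟦X⟧) * ((n : R⟦X⟧) - 1) * u +
      2 * (n : R⟦X⟧) * X * d⁄dX R u + X ^ 2 * d⁄dX R (d⁄dX R u)) := by
  have h := X_mul_derivative_X_mul (d⁄dX R (X ^ n * u))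
  rw [X_mul_derivative_X_pow_mul, X_mul_derivative_X_pow_mul, map_add, Derivation.leibniz,
    Derivation.leibniz, Derivation.map_natCast, derivative_X] at h
  simp only [smul_eq_mul] at h
  linear_combination -h

theorem X_sq_mul_quadDiff_X_pow_mul (n : ℕ) (u : R⟦X⟧) :
    X ^ 2 * quadDiff (X ^ n * u) = X ^ (2 * n) * (C ((n : R) * (n - 2)) * u ^ 2 +
      X * (C (2 * n : R) * (u * d⁄dX R u)) + X ^ 2 * quadDiff u) := by
  have h1 := X_mul_derivative_X_pow_mul n u
  have h2 := X_sq_mul_derivative_derivative_X_pow_mul n u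
  simp only [quadDiff, map_mul, map_sub, map_natCast, map_ofNat]
  linear_combination (2 * X ^ n * u) * h2 -
    (X * d⁄dX R (X ^ n * u) + X ^ n * ((n : R⟦X⟧) * u + X * d⁄dX R u)) * h1

end CommRing

section Field

variable {K : Type*} [Field K]

theorem exists_coe_div_eq_coe_iff_dvd {f g : K⟦X⟧} (hg : g ≠ 0) :
    (∃ p : K⟦X⟧, (f : LaurentSeries K) / g = p) ↔ g ∣ f := by
  have hg' : (g : LaurentSeries K) ≠ 0 :=
    (map_ne_zero_iff _ HahnSeries.ofPowerSeries_injective).2 hg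
  simp_rw [div_eq_iff hg', ← map_mul, HahnSeries.ofPowerSeries_injective.eq_iff,
    dvd_iff_exists_eq_mul_left]

theorem sq_dvd_quadDiff_X_pow_mul_iff [CharZero K] {u : K⟦X⟧} (hu : constantCoeff u ≠ 0)
    (n : ℕ) : (X ^ n * u) ^ 2 ∣ quadDiff (X ^ n * u) ↔ n = 0 ∨ n = 2 ∧ coeff 1 u = 0 := by
  have hunit : IsUnit (u ^ 2) := (isUnit_iff_constantCoeff.2 hu.isUnit).pow 2
  rw [mul_pow, ← pow_mul', hunit.mul_right_dvd,
    ← mul_dvd_mul_iff_left (pow_ne_zero 2 X_ne_zero), X_sq_mul_quadDiff_X_pow_mul, mul_comm,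
    mul_dvd_mul_iff_left (pow_ne_zero _ X_ne_zero), X_sq_dvd_iff]
  have hcoeff0 : coeff 0 (C ((n : K) * (n - 2)) * u ^ 2 +
      X * (C (2 * n : K) * (u * d⁄dX K u)) + X ^ 2 * quadDiff u) =
      n * (n - 2) * constantCoeff u ^ 2 := by
    simp
  have hcoeff1 : coeff 1 (C ((n : K) * (n - 2)) * u ^ 2 +
      X * (C (2 * n : K) * (u * d⁄dX K u)) + X ^ 2 * quadDiff u) =
      2 * n * (n - 1) * constantCoeff u * coeff 1 u := by
    rw [map_add, map_add, coeff_C_mul, coeff_succ_X_mul, coeff_C_mul, coeff_X_pow_mul', sq]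
    simp only [coeff_mul, Finset.Nat.sum_antidiagonal_succ, coeff_zero_eq_constantCoeff, zero_add,
      Finset.HasAntidiagonal.antidiagonal_zero, Finset.sum_singleton, coeff_derivative,
      Nat.cast_zero, mul_one, Nat.not_ofNat_le_one, ↓reduceIte, add_zero]
    ring
  rw [hcoeff0, hcoeff1]
  constructor
  · rintro ⟨h0, h1⟩
    have hn : (n : K) = 0 ∨ (n : K) = 2 := by simpa [hu, sub_eq_zero] using h0
    rcases hn with hn | hn
    · exact Or.inl (by exact_mod_cast hn)
    · obtain rfl : n = 2 := by exact_mod_cast hn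
      norm_num [hu] at h1
      exact Or.inr ⟨rfl, h1⟩
  · rintro (rfl | ⟨rfl, h⟩) <;> simp [*]

end Field

end PowerSeries

/-- Let `g ∈ ℂ[[z]]` be nonzero.  The Laurent series
`h = (2gg'' − (g')²)/g²` (the quotient taken in `ℂ((z))`) is regular at
`z = 0`, i.e. comes from a power series, if and only if `g(0) ≠ 0` or
`g = z²·g̃` with `g̃(0) ≠ 0` and `g̃'(0) = 0`. -/
theorem laurent_regularity_criterion (g : PowerSeries ℂ) (hg : g ≠ 0) :
    (∃ p : PowerSeries ℂ,
      ((2 * g * (PowerSeries.derivative ℂ (PowerSeries.derivative ℂ g))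
          - (PowerSeries.derivative ℂ g) ^ 2 : PowerSeries ℂ) : LaurentSeries ℂ)
        / ((g : PowerSeries ℂ) : LaurentSeries ℂ) ^ 2
        = ((p : PowerSeries ℂ) : LaurentSeries ℂ)) ↔
    (PowerSeries.constantCoeff g ≠ 0 ∨
      ∃ gt : PowerSeries ℂ, g = PowerSeries.X ^ 2 * gt ∧
        PowerSeries.constantCoeff gt ≠ 0 ∧ PowerSeries.coeff 1 gt = 0) := by
  rw [← map_pow (HahnSeries.ofPowerSeries ℤ ℂ) g 2,
    exists_coe_div_eq_coe_iff_dvd (pow_ne_zero 2 hg)]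
  obtain ⟨n, u, hu, rfl⟩ := exists_eq_X_pow_mul_of_ne_zero hg
  refine (sq_dvd_quadDiff_X_pow_mul_iff hu n).trans (or_congr ?_ ⟨?_, ?_⟩)
  · simp [hu]
  · rintro ⟨rfl, hu₁⟩
    exact ⟨u, rfl, hu, hu₁⟩
  · rintro ⟨gt, h, hgt₀, hgt₁⟩
    obtain ⟨rfl, rfl⟩ := (X_pow_mul_eq_X_pow_mul_iff hu hgt₀).1 h
    exact ⟨rfl, hgt₁⟩
end

section
/- Let R = k[x,y]/(y² − x³ − λx²) with λ ≠ 0 (nodal cubic) and singular point given by the maximal ideal m = (x,y). Choose ρ ∈ k with ρ² = λ. In the completion R̂ of R at m there exist elements u₊, u₋ with u₊u₋ = 0 and R̂ ≅ k[[u₊,u₋]]/(u₊u₋), such that R̂/(x², y + ρx) ≅ k[[u₊,u₋]]/(u₊u₋, u₊, u₋²) and R̂/(x², y − ρx) ≅ k[[u₊,u₋]]/(u₊u₋, u₋, u₊²). In particular the modules R̂/(x², y + ρx) and R̂/(x², y − ρx) are not isomorphic. -/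
/-!
Let `s = √(λ + x) ∈ k[[x,y]]` with `s(0) = ρ`, so that `x = (s - ρ)(s + ρ)`, and let
`q = s(s + ρ)`, a unit. Dividing the branches `y ± x s` by `q` gives
`u± = y/q ± (s - ρ)` with `u₊u₋ = (y² - x³ - λx²)/q²`. Unlike `y ± x s`, these coordinates
have a polynomial inverse: with `t = ρ + (u₊ - u₋)/2` (the image of `s`) one has
`x = t² - ρ²` and `y = t(t + ρ)(u₊ + u₋)/2`. So `(X₀, X₁) ↦ (u₊, u₋)` is an automorphism of
`k[[x,y]]` carrying `(X₀X₁)` to `(y² - x³ - λx²)`. Writing `x` and `y ± ρx` in terms of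
`u₊, u₋` identifies the two ideals. Isomorphic cyclic modules have the same annihilator, so the
two ideals would coincide, putting `u₋` in `(u₊, u₋²)`, which the coefficient of `u₋` rules out
in `k[[u₊,u₋]]/(u₊u₋)`.
-/

open MvPowerSeries

/-- The complete local ring of the nodal cubic `y² = x³ + λx²` at its singular
point: `R̂ = k[[x,y]]/(y² − x³ − λx²)`. -/
noncomputable abbrev NodalCompletion (k : Type*) [Field k] (lam : k) : Type _ :=
  MvPowerSeries (Fin 2) k ⧸
    (Ideal.span {(MvPowerSeries.X 1 : MvPowerSeries (Fin 2) k) ^ 2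
      - MvPowerSeries.X 0 ^ 3
      - (MvPowerSeries.C lam : MvPowerSeries (Fin 2) k) * MvPowerSeries.X 0 ^ 2})

/-- The ring `k[[u₊,u₋]]/(u₊u₋)`. -/
noncomputable abbrev NodeModel (k : Type*) [Field k] : Type _ :=
  MvPowerSeries (Fin 2) k ⧸
    (Ideal.span {(MvPowerSeries.X 0 : MvPowerSeries (Fin 2) k) * MvPowerSeries.X 1})

namespace MvPowerSeries

section Substitution

variable {σ R : Type*} [CommRing R]

noncomputable def substAlgEquiv {a b : σ → MvPowerSeries σ R} (ha : HasSubst a)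
    (hb : HasSubst b) (hab : ∀ i, subst a (b i) = X i) (hba : ∀ i, subst b (a i) = X i) :
    MvPowerSeries σ R ≃ₐ[R] MvPowerSeries σ R :=
  AlgEquiv.ofAlgHom (substAlgHom ha) (substAlgHom hb)
    (AlgHom.ext fun f => by
      simp only [AlgHom.comp_apply, substAlgHom_apply, subst_comp_subst_apply hb ha, hab,
        subst_self, id_eq, AlgHom.id_apply])
    (AlgHom.ext fun f => by
      simp only [AlgHom.comp_apply, substAlgHom_apply, subst_comp_subst_apply ha hb, hba,
        subst_self, id_eq, AlgHom.id_apply])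

@[simp]
lemma substAlgEquiv_apply {a b : σ → MvPowerSeries σ R} (ha : HasSubst a) (hb : HasSubst b)
    (hab : ∀ i, subst a (b i) = X i) (hba : ∀ i, subst b (a i) = X i)
    (f : MvPowerSeries σ R) : substAlgEquiv ha hb hab hba f = subst a f :=
  substAlgHom_apply ha f

theorem constantCoeff_subst_of_constantCoeff_eq_zero {τ : Type*} {a : σ → MvPowerSeries τ R}
    (ha : HasSubst a) (ha0 : ∀ i, constantCoeff (a i) = 0) (f : MvPowerSeries σ R) :
    constantCoeff (subst a f) = constantCoeff f := by
  have h := constantCoeff_subst_eq_zero ha ha0 (f := f - C (constantCoeff f)) (by simp)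
  rwa [subst_sub ha, subst_C, map_sub, constantCoeff_C, sub_eq_zero] at h

end Substitution

section SquareRoot

variable {σ k : Type*} [Field k]

/-- The square root is `c · (1 + f / c²)^(1/2)`, expanded as a binomial series. -/
theorem exists_sq_eq_C_sq_add [CharZero k] {c : k} (hc : c ≠ 0) {f : MvPowerSeries σ k}
    (hf : constantCoeff f = 0) :
    ∃ s : MvPowerSeries σ k, s ^ 2 = C (c ^ 2) + f ∧ constantCoeff s = c := by
  set g := C (c ^ 2)⁻¹ * f
  have hg0 : constantCoeff g = 0 := by simp [g, hf]
  set φ := PowerSeries.substAlgHom (R := k) (PowerSeries.HasSubst.of_constantCoeff_zero hg0)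
  set B := PowerSeries.binomialSeries k (1 / 2 : ℚ)
  refine ⟨C c * φ B, ?_, ?_⟩
  · have hB : B ^ 2 = 1 + PowerSeries.X := by
      rw [sq, ← PowerSeries.binomialSeries_add, add_halves, ← Nat.cast_one,
        PowerSeries.binomialSeries_nat, pow_one]
    rw [mul_pow, ← map_pow φ, hB, map_add, map_one, PowerSeries.substAlgHom_X, ← map_pow,
      mul_add, mul_one, ← mul_assoc, ← map_mul, mul_inv_cancel₀ (pow_ne_zero 2 hc), map_one,
      one_mul]
  · have hB1 : constantCoeff (φ (B - 1)) = 0 := by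
      rw [PowerSeries.coe_substAlgHom]
      exact PowerSeries.constantCoeff_subst_eq_zero hg0 _ (by simp [B])
    rw [map_sub, map_one, map_sub, sub_eq_zero, map_one] at hB1
    rw [map_mul, hB1, constantCoeff_C, mul_one]

theorem eq_of_sq_eq_of_constantCoeff_eq [NeZero (2 : k)] {s t : MvPowerSeries σ k}
    (hst : s ^ 2 = t ^ 2) (hc : constantCoeff s = constantCoeff t)
    (ht : constantCoeff t ≠ 0) : s = t := by
  have hu : IsUnit (s + t) := by
    rw [isUnit_iff_constantCoeff, map_add, hc, ← two_mul]
    exact (mul_ne_zero two_ne_zero ht).isUnit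
  have : (s - t) * (s + t) = 0 := by linear_combination hst
  exact sub_eq_zero.mp (hu.mul_left_eq_zero.mp this)

end SquareRoot

end MvPowerSeries

namespace Ideal

variable {R : Type*} [CommRing R] {x y r s u v : R}

theorem span_sq_add_mul_eq (h2 : IsUnit (2 : R)) (he : IsUnit (s + r))
    (hx : x = (s - r) * (s + r)) (hsub : u - v = 2 * (s - r))
    (hadd : s * (s + r) * (u + v) = 2 * y) (huv : u * v = 0) :
    span {x ^ 2, y + r * x} = span {u, v ^ 2} := by
  have h4 : IsUnit (2 * 2 : R) := h2.mul h2
  have hx2 : 2 * 2 * x ^ 2 = (s + r) ^ 2 * (u * u + v ^ 2) := by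
    rw [hx]
    linear_combination (-(s + r) ^ 2 * (u - v + 2 * (s - r))) * hsub - 2 * (s + r) ^ 2 * huv
  have hlin : 2 * 2 * (y + r * x) = (s + r) * (2 * (s + r) * u - v ^ 2) := by
    rw [hx]
    linear_combination (-2) * hadd - (s + r) * (v + 2 * r) * hsub + (s + r) * huv
  apply le_antisymm
  · rw [span_le, Set.insert_subset_iff, Set.singleton_subset_iff]
    constructor
    · rw [SetLike.mem_coe, ← unit_mul_mem_iff_mem _ h4, hx2]
      exact mul_mem_left _ _ (add_mem (mul_mem_left _ _ (subset_span (by simp)))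
        (subset_span (by simp)))
    · rw [SetLike.mem_coe, ← unit_mul_mem_iff_mem _ h4, hlin]
      exact mul_mem_left _ _ (sub_mem (mul_mem_left _ _ (subset_span (by simp)))
        (subset_span (by simp)))
  · set I := span {x ^ 2, y + r * x}
    have hT : 2 * (s + r) * u - v ^ 2 ∈ I := by
      rw [← unit_mul_mem_iff_mem _ he, ← hlin]
      exact mul_mem_left _ _ (subset_span (by simp))
    have hu2 : u * u ∈ I := by
      rw [← unit_mul_mem_iff_mem _ (h2.mul he),
        show 2 * (s + r) * (u * u) = u * (2 * (s + r) * u - v ^ 2) by linear_combination v * huv]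
      exact mul_mem_left _ _ hT
    have hv2 : v ^ 2 ∈ I := by
      have : u * u + v ^ 2 ∈ I := by
        rw [← unit_mul_mem_iff_mem _ (he.pow 2), ← hx2]
        exact mul_mem_left _ _ (subset_span (by simp))
      simpa using sub_mem this hu2
    rw [span_le, Set.insert_subset_iff, Set.singleton_subset_iff]
    refine ⟨?_, hv2⟩
    rw [SetLike.mem_coe, ← unit_mul_mem_iff_mem _ (h2.mul he)]
    simpa using add_mem hT hv2

theorem span_sq_sub_mul_eq (h2 : IsUnit (2 : R)) (he : IsUnit (s + r))
    (hx : x = (s - r) * (s + r)) (hsub : u - v = 2 * (s - r))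
    (hadd : s * (s + r) * (u + v) = 2 * y) (huv : u * v = 0) :
    span {x ^ 2, y - r * x} = span {v, u ^ 2} := by
  rw [sub_eq_add_neg, ← neg_mul]
  refine span_sq_add_mul_eq (s := -s) h2 (by rw [← neg_add]; exact he.neg) (by rw [hx]; ring)
    (by linear_combination -hsub) (by linear_combination hadd) (by rw [mul_comm, huv])

end Ideal

namespace NodalCubic

variable {k : Type*} [Field k] (ρ : k)

noncomputable def branchScale (s : MvPowerSeries (Fin 2) k) : MvPowerSeries (Fin 2) k :=
  s * (s + C ρ)

noncomputable def nodeCoords (s : MvPowerSeries (Fin 2) k) : Fin 2 → MvPowerSeries (Fin 2) k :=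
  ![X 1 * (branchScale ρ s)⁻¹ + (s - C ρ), X 1 * (branchScale ρ s)⁻¹ - (s - C ρ)]

noncomputable def sqrtInNodeCoords : MvPowerSeries (Fin 2) k := C ρ + C 2⁻¹ * (X 0 - X 1)

noncomputable def nodeCoordsInv : Fin 2 → MvPowerSeries (Fin 2) k :=
  ![sqrtInNodeCoords ρ ^ 2 - C (ρ ^ 2),
    branchScale ρ (sqrtInNodeCoords ρ) * (C 2⁻¹ * (X 0 + X 1))]

variable {ρ}

lemma subst_branchScale {a : Fin 2 → MvPowerSeries (Fin 2) k} (ha : HasSubst a)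
    (f : MvPowerSeries (Fin 2) k) : subst a (branchScale ρ f) = branchScale ρ (subst a f) := by
  rw [branchScale, branchScale, subst_mul ha, subst_add ha, subst_C]

lemma constantCoeff_nodeCoordsInv (i : Fin 2) : constantCoeff (nodeCoordsInv ρ i) = 0 := by
  fin_cases i <;> simp [nodeCoordsInv, sqrtInNodeCoords, branchScale]

lemma hasSubst_nodeCoordsInv : HasSubst (nodeCoordsInv ρ) :=
  hasSubst_of_constantCoeff_zero constantCoeff_nodeCoordsInv

lemma C_half_mul_two [NeZero (2 : k)] : (C 2⁻¹ : MvPowerSeries (Fin 2) k) * 2 = 1 := by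
  rw [← map_ofNat C 2, ← map_mul, inv_mul_cancel₀ two_ne_zero, map_one]

lemma X_one_notMem_span :
    (Ideal.Quotient.mk _ (X 1) : NodeModel k) ∉
      Ideal.span {Ideal.Quotient.mk _ (X 0), Ideal.Quotient.mk _ (X 1) ^ 2} := by
  intro h
  obtain ⟨α, β, hαβ⟩ := Ideal.mem_span_pair.mp h
  obtain ⟨α, rfl⟩ := Ideal.Quotient.mk_surjective α
  obtain ⟨β, rfl⟩ := Ideal.Quotient.mk_surjective β
  rw [← map_pow, ← map_mul, ← map_mul, ← map_add, Ideal.Quotient.eq,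
    Ideal.mem_span_singleton'] at hαβ
  obtain ⟨γ, hγ⟩ := hαβ
  have := congrArg (coeff (Finsupp.single 1 1)) hγ
  rw [mul_comm (X 0), ← mul_assoc, X_pow_eq, X_def 0] at this
  simp [coeff_mul_monomial, Finsupp.single_le_iff, coeff_X] at this

lemma span_ne_span_swap_of_algEquiv {R : Type*} [CommRing R] [Algebra k R]
    (φ : NodeModel k ≃ₐ[k] R) :
    Ideal.span {φ (Ideal.Quotient.mk _ (X 0)), φ (Ideal.Quotient.mk _ (X 1)) ^ 2} ≠
      Ideal.span {φ (Ideal.Quotient.mk _ (X 1)), φ (Ideal.Quotient.mk _ (X 0)) ^ 2} := by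
  intro h
  apply X_one_notMem_span (k := k)
  have hv := Ideal.mem_map_of_mem φ.symm (h.symm.le (Ideal.subset_span (Set.mem_insert _ _)))
  rwa [Ideal.map_span, Set.image_pair, map_pow, φ.symm_apply_apply, φ.symm_apply_apply] at hv

variable {s : MvPowerSeries (Fin 2) k}

lemma X_zero_eq_mul (hs : s ^ 2 = C (ρ ^ 2) + X 0) : X 0 = (s - C ρ) * (s + C ρ) := by
  linear_combination -hs - map_pow C ρ 2

lemma nodeCoords_sub : nodeCoords ρ s 0 - nodeCoords ρ s 1 = 2 * (s - C ρ) := by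
  simp only [nodeCoords, Matrix.cons_val_zero, Matrix.cons_val_one]
  ring

lemma hasSubst_nodeCoords (hs0 : constantCoeff s = ρ) : HasSubst (nodeCoords ρ s) := by
  refine hasSubst_of_constantCoeff_zero fun i => ?_
  fin_cases i <;> simp [nodeCoords, hs0]

lemma constantCoeff_branchScale (hs0 : constantCoeff s = ρ) :
    constantCoeff (branchScale ρ s) = 2 * ρ ^ 2 := by
  rw [branchScale, map_mul, map_add, hs0, constantCoeff_C]
  ring

variable [NeZero (2 : k)] (hρ : ρ ≠ 0)
include hρ

lemma isUnit_add_C (hs0 : constantCoeff s = ρ) : IsUnit (s + C ρ) := by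
  rw [isUnit_iff_constantCoeff, map_add, hs0, constantCoeff_C, ← two_mul]
  exact (mul_ne_zero two_ne_zero hρ).isUnit

lemma branchScale_mul_inv (hs0 : constantCoeff s = ρ) :
    branchScale ρ s * (branchScale ρ s)⁻¹ = 1 :=
  MvPowerSeries.mul_inv_cancel _ (by
    rw [constantCoeff_branchScale hs0]
    exact mul_ne_zero two_ne_zero (pow_ne_zero 2 hρ))

lemma branchScale_mul_nodeCoords_add (hs0 : constantCoeff s = ρ) :
    branchScale ρ s * (nodeCoords ρ s 0 + nodeCoords ρ s 1) = 2 * X 1 := by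
  simp only [nodeCoords, Matrix.cons_val_zero, Matrix.cons_val_one]
  linear_combination (2 * X 1) * branchScale_mul_inv hρ hs0

lemma nodeCoords_mul (hs : s ^ 2 = C (ρ ^ 2) + X 0) (hs0 : constantCoeff s = ρ) :
    nodeCoords ρ s 0 * nodeCoords ρ s 1 =
      (X 1 ^ 2 - X 0 ^ 3 - C (ρ ^ 2) * X 0 ^ 2) * ((branchScale ρ s)⁻¹) ^ 2 := by
  have hw := branchScale_mul_inv hρ hs0
  set w := (branchScale ρ s)⁻¹
  set T := s ^ 2 - C ρ ^ 2
  rw [branchScale] at hw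
  rw [map_pow] at hs ⊢
  simp only [nodeCoords, Matrix.cons_val_zero, Matrix.cons_val_one]
  linear_combination
    (-(w ^ 2) * (X 0 ^ 2 + X 0 * T + T ^ 2 + C ρ ^ 2 * (X 0 + T))) * hs +
      (s - C ρ) ^ 2 * (s * (s + C ρ) * w + 1) * hw

lemma subst_nodeCoords_nodeCoordsInv (hs : s ^ 2 = C (ρ ^ 2) + X 0)
    (hs0 : constantCoeff s = ρ) (i : Fin 2) :
    subst (nodeCoords ρ s) (nodeCoordsInv ρ i) = X i := by
  have hP := hasSubst_nodeCoords hs0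
  have hsqrt : subst (nodeCoords ρ s) (sqrtInNodeCoords ρ) = s := by
    simp only [sqrtInNodeCoords, subst_add hP, subst_mul hP, subst_sub hP, subst_C, subst_X hP]
    simp only [nodeCoords, Matrix.cons_val_zero, Matrix.cons_val_one]
    linear_combination (s - C ρ) * C_half_mul_two (k := k)
  fin_cases i
  · simp only [nodeCoordsInv, Fin.zero_eta, Matrix.cons_val_zero, subst_sub hP, subst_pow hP,
      hsqrt, subst_C]
    linear_combination hs
  · simp only [nodeCoordsInv, Fin.mk_one, Matrix.cons_val_one, Matrix.cons_val_zero,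
      subst_mul hP, subst_branchScale hP, hsqrt, subst_C, subst_add hP, subst_X hP]
    linear_combination C 2⁻¹ * branchScale_mul_nodeCoords_add hρ hs0 +
      X 1 * C_half_mul_two (k := k)

lemma subst_nodeCoordsInv_nodeCoords (hs : s ^ 2 = C (ρ ^ 2) + X 0)
    (hs0 : constantCoeff s = ρ) (i : Fin 2) :
    subst (nodeCoordsInv ρ) (nodeCoords ρ s i) = X i := by
  have hQ := hasSubst_nodeCoordsInv (k := k) (ρ := ρ)
  have hsqrt : subst (nodeCoordsInv ρ) s = sqrtInNodeCoords ρ := by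
    refine eq_of_sq_eq_of_constantCoeff_eq ?_ ?_ ?_
    · rw [← subst_pow hQ, hs, subst_add hQ, subst_C, subst_X hQ]
      simp only [nodeCoordsInv, Matrix.cons_val_zero]
      ring
    · rw [constantCoeff_subst_of_constantCoeff_eq_zero hQ constantCoeff_nodeCoordsInv, hs0]
      simp [sqrtInNodeCoords]
    · simpa [sqrtInNodeCoords] using hρ
  have hw : branchScale ρ (sqrtInNodeCoords ρ) *
      subst (nodeCoordsInv ρ) (branchScale ρ s)⁻¹ = 1 := by
    rw [← hsqrt, ← subst_branchScale hQ, ← subst_mul hQ, branchScale_mul_inv hρ hs0,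
      ← coe_substAlgHom hQ, map_one]
  fin_cases i <;>
    simp only [nodeCoords, Fin.zero_eta, Fin.mk_one, Matrix.cons_val_zero, Matrix.cons_val_one,
      subst_add hQ, subst_sub hQ, subst_mul hQ, subst_X hQ, hsqrt, subst_C] <;>
    generalize subst (nodeCoordsInv ρ) (branchScale ρ s)⁻¹ = w at hw ⊢ <;>
    simp only [nodeCoordsInv, sqrtInNodeCoords, Matrix.cons_val_zero, Matrix.cons_val_one]
      at hw ⊢
  · linear_combination (C 2⁻¹ * (X 0 + X 1)) * hw + X 0 * C_half_mul_two (k := k)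
  · linear_combination (C 2⁻¹ * (X 0 + X 1)) * hw + X 1 * C_half_mul_two (k := k)

noncomputable def nodeEquiv (hs : s ^ 2 = C (ρ ^ 2) + X 0) (hs0 : constantCoeff s = ρ) :
    MvPowerSeries (Fin 2) k ≃ₐ[k] MvPowerSeries (Fin 2) k :=
  substAlgEquiv (hasSubst_nodeCoords hs0) hasSubst_nodeCoordsInv
    (subst_nodeCoords_nodeCoordsInv hρ hs hs0) (subst_nodeCoordsInv_nodeCoords hρ hs hs0)

lemma nodeEquiv_X (hs : s ^ 2 = C (ρ ^ 2) + X 0) (hs0 : constantCoeff s = ρ) (i : Fin 2) :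
    nodeEquiv hρ hs hs0 (X i) = nodeCoords ρ s i := by
  rw [nodeEquiv, substAlgEquiv_apply, subst_X (hasSubst_nodeCoords hs0)]

lemma map_nodeEquiv_span (hs : s ^ 2 = C (ρ ^ 2) + X 0) (hs0 : constantCoeff s = ρ) :
    (Ideal.span {X 0 * X 1}).map (nodeEquiv hρ hs hs0) =
      Ideal.span {X 1 ^ 2 - X 0 ^ 3 - C (ρ ^ 2) * X 0 ^ 2} := by
  rw [Ideal.map_span, Set.image_singleton, map_mul, nodeEquiv_X, nodeEquiv_X,
    nodeCoords_mul hρ hs hs0, Ideal.span_singleton_mul_right_unit]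
  exact (IsUnit.of_mul_eq_one_right _ (branchScale_mul_inv hρ hs0)).pow 2

section Quotient

variable {R : Type*} [CommRing R] {π : MvPowerSeries (Fin 2) k →+* R}
  (hs : s ^ 2 = C (ρ ^ 2) + X 0) (hs0 : constantCoeff s = ρ)
  (hπ : π (X 1 ^ 2 - X 0 ^ 3 - C (ρ ^ 2) * X 0 ^ 2) = 0)
include hs hs0 hπ

lemma map_nodeCoords_mul_eq_zero : π (nodeCoords ρ s 0) * π (nodeCoords ρ s 1) = 0 := by
  rw [← map_mul, nodeCoords_mul hρ hs hs0, map_mul, hπ, zero_mul]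

lemma span_map_X_eq_span_map_nodeCoords :
    Ideal.span {π (X 0) ^ 2, π (X 1) + π (C ρ) * π (X 0)} =
        Ideal.span {π (nodeCoords ρ s 0), π (nodeCoords ρ s 1) ^ 2} ∧
      Ideal.span {π (X 0) ^ 2, π (X 1) - π (C ρ) * π (X 0)} =
        Ideal.span {π (nodeCoords ρ s 1), π (nodeCoords ρ s 0) ^ 2} := by
  have h2 : IsUnit (2 : R) := IsUnit.of_mul_eq_one_right (π (C 2⁻¹)) (by
    rw [← map_ofNat π 2, ← map_mul, C_half_mul_two, map_one])
  have he : IsUnit (π s + π (C ρ)) := by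
    rw [← map_add]
    exact (isUnit_add_C hρ hs0).map π
  have hx : π (X 0) = (π s - π (C ρ)) * (π s + π (C ρ)) := by
    rw [← map_sub, ← map_add, ← map_mul, ← X_zero_eq_mul hs]
  have hsub : π (nodeCoords ρ s 0) - π (nodeCoords ρ s 1) = 2 * (π s - π (C ρ)) := by
    rw [← map_sub, nodeCoords_sub, map_mul, map_ofNat, map_sub]
  have hadd : π s * (π s + π (C ρ)) * (π (nodeCoords ρ s 0) + π (nodeCoords ρ s 1)) =
      2 * π (X 1) := by
    rw [← map_add, ← map_add, ← map_mul, ← map_mul, ← branchScale,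
      branchScale_mul_nodeCoords_add hρ hs0, map_mul, map_ofNat]
  have huv := map_nodeCoords_mul_eq_zero hρ hs hs0 hπ
  exact ⟨Ideal.span_sq_add_mul_eq h2 he hx hsub hadd huv,
    Ideal.span_sq_sub_mul_eq h2 he hx hsub hadd huv⟩

end Quotient

end NodalCubic

open NodalCubic

theorem nodal_torsion_modules_general (k : Type*) [Field k]
    [CharZero k] (lam ρ : k) (hlam : lam ≠ 0) (hρ : ρ ^ 2 = lam) :
    let Rh := NodalCompletion k lam
    let x : Rh := Ideal.Quotient.mk _ (MvPowerSeries.X 0)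
    let y : Rh := Ideal.Quotient.mk _ (MvPowerSeries.X 1)
    let Iplus : Ideal Rh := Ideal.span {x ^ 2, y + algebraMap k Rh ρ * x}
    let Iminus : Ideal Rh := Ideal.span {x ^ 2, y - algebraMap k Rh ρ * x}
    ∃ (uplus uminus : Rh) (φ : NodeModel k ≃ₐ[k] Rh),
      φ (Ideal.Quotient.mk _ (MvPowerSeries.X 0)) = uplus ∧
      φ (Ideal.Quotient.mk _ (MvPowerSeries.X 1)) = uminus ∧
      uplus * uminus = 0 ∧
      Iplus = Ideal.span {uplus, uminus ^ 2} ∧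
      Iminus = Ideal.span {uminus, uplus ^ 2} ∧
      ¬ Nonempty ((Rh ⧸ Iplus) ≃ₗ[Rh] (Rh ⧸ Iminus)) := by
  intro Rh x y Iplus Iminus
  subst hρ
  have hρ0 : ρ ≠ 0 := fun h => hlam (by simp [h])
  obtain ⟨s, hs, hs0⟩ := exists_sq_eq_C_sq_add hρ0 (constantCoeff_X (0 : Fin 2))
  have hπ := Ideal.Quotient.eq_zero_iff_mem.mpr (Ideal.subset_span rfl :
    (X 1 : MvPowerSeries (Fin 2) k) ^ 2 - X 0 ^ 3 - C (ρ ^ 2) * X 0 ^ 2 ∈ Ideal.span {_})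
  have hr : algebraMap k Rh ρ = Ideal.Quotient.mk _ (C ρ) := by
    rw [← Ideal.Quotient.mk_algebraMap, MvPowerSeries.algebraMap_apply, Algebra.algebraMap_self,
      RingHom.id_apply]
  obtain ⟨hplus, hminus⟩ := span_map_X_eq_span_map_nodeCoords hρ0 hs hs0 hπ
  rw [← hr] at hplus hminus
  let φ := Ideal.quotientEquivAlg _ _ (nodeEquiv hρ0 hs hs0) (map_nodeEquiv_span hρ0 hs hs0).symm
  have hφ (i : Fin 2) : φ (Ideal.Quotient.mk _ (X i)) = Ideal.Quotient.mk _ (nodeCoords ρ s i) :=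
    congrArg (Ideal.Quotient.mk _) (nodeEquiv_X hρ0 hs hs0 i)
  refine ⟨_, _, φ, hφ 0, hφ 1, map_nodeCoords_mul_eq_zero hρ0 hs hs0 hπ, hplus, hminus, ?_⟩
  rintro ⟨e⟩
  apply span_ne_span_swap_of_algEquiv φ
  rw [hφ, hφ, ← hplus, ← hminus]
  exact Ideal.annihilator_quotient.symm.trans (e.annihilator_eq.trans Ideal.annihilator_quotient)

/-- In the completion `R̂` of the nodal cubic `R = k[x,y]/(y² − x³ − λx²)`
(`λ ≠ 0`) at its singular point there are elements `u₊, u₋` with `u₊u₋ = 0`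
identifying `R̂` with `k[[u₊,u₋]]/(u₊u₋)`, such that the ideal `(x², y + ρx)`
becomes `(u₊, u₋²)` and the ideal `(x², y − ρx)` becomes `(u₋, u₊²)`, where
`ρ² = λ`.  In particular the `R̂`-modules `R̂/(x², y + ρx)` and
`R̂/(x², y − ρx)` are not isomorphic. -/
theorem nodal_torsion_modules (k : Type*) [Field k] [IsAlgClosed k]
    [CharZero k] (lam ρ : k) (hlam : lam ≠ 0) (hρ : ρ ^ 2 = lam) :
    let Rh := NodalCompletion k lam
    let x : Rh := Ideal.Quotient.mk _ (MvPowerSeries.X 0)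
    let y : Rh := Ideal.Quotient.mk _ (MvPowerSeries.X 1)
    let Iplus : Ideal Rh := Ideal.span {x ^ 2, y + algebraMap k Rh ρ * x}
    let Iminus : Ideal Rh := Ideal.span {x ^ 2, y - algebraMap k Rh ρ * x}
    ∃ (uplus uminus : Rh) (φ : NodeModel k ≃ₐ[k] Rh),
      φ (Ideal.Quotient.mk _ (MvPowerSeries.X 0)) = uplus ∧
      φ (Ideal.Quotient.mk _ (MvPowerSeries.X 1)) = uminus ∧
      uplus * uminus = 0 ∧
      Iplus = Ideal.span {uplus, uminus ^ 2} ∧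
      Iminus = Ideal.span {uminus, uplus ^ 2} ∧
      ¬ Nonempty ((Rh ⧸ Iplus) ≃ₗ[Rh] (Rh ⧸ Iminus)) :=
  nodal_torsion_modules_general k lam ρ hlam hρ
end

section
/- Let L = (∂² − z⁴/4)² + 2∂ − z² and M = 2∂⁶ − (3/2)z⁴∂⁴ + 6(1−2z³)∂³ + z²((3/8)z⁶ − 45)∂² + z(3z⁶ − (3/2)z³ − 54)∂ + (−(1/32)z¹² + (37/4)z⁶ − 3z³ − 14) in ℂ[z][∂]. Then the third-order operator R = ∂³ − (1/2)z²∂² + z(−(1/4)z³ + 1)∂ + ((1/8)z⁶ − (3/2)z³ + 1) right-divides both L and M, i.e. there exist Q₁, Q₂ ∈ ℂ[z][∂] with L = Q₁·R and M = Q₂·R. -/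
/-!
The quotients are `Q₁ = ∂ + z²/2` and `Q₂ = 2∂³ + z²∂² + (4z − z⁴/2)∂ + 4 − z⁶/4`.
Both identities `L = Q₁ R` and `M = Q₂ R` are checked by moving every `∂` to the right of
every `z` with the single rule `∂ z = z ∂ + 1`; once both sides are combinations of the
normally ordered monomials `z^i ∂^j`, the identity is a linear one over the scalars.
-/

section WeylRelation

variable {K A : Type*} [Field K] [Ring A] [Algebra K A]

variable (K) in
def weylL (z d : A) : A :=
  let c : K → A := algebraMap K A
  (d ^ 2 - c (1/4) * z ^ 4) ^ 2 + 2 * d - z ^ 2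

variable (K) in
def weylM (z d : A) : A :=
  let c : K → A := algebraMap K A
  2 * d ^ 6 - c (3/2) * z ^ 4 * d ^ 4
    + 6 * (1 - 2 * z ^ 3) * d ^ 3
    + z ^ 2 * (c (3/8) * z ^ 6 - 45) * d ^ 2
    + z * (3 * z ^ 6 - c (3/2) * z ^ 3 - 54) * d
    + (- c (1/32) * z ^ 12 + c (37/4) * z ^ 6 - 3 * z ^ 3 - 14)

variable (K) in
def weylR (z d : A) : A :=
  let c : K → A := algebraMap K A
  d ^ 3 - c (1/2) * z ^ 2 * d ^ 2
    + z * (- c (1/4) * z ^ 3 + 1) * d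
    + (c (1/8) * z ^ 6 - c (3/2) * z ^ 3 + 1)

variable [CharZero K] {z d : A}

theorem mul_mul_of_mul_sub_mul_eq_one (h : d * z - z * d = 1) (x : A) :
    d * (z * x) = z * (d * x) + x := by
  rw [← mul_assoc, sub_eq_iff_eq_add'.mp h, add_mul, one_mul, mul_assoc]

theorem weylL_eq_mul_weylR (h : d * z - z * d = 1) :
    let c : K → A := algebraMap K A
    weylL K z d = (d + c (1/2) * z ^ 2) * weylR K z d := by
  simp only [weylL, weylR, Algebra.algebraMap_eq_smul_one, ← map_ofNat (algebraMap K A),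
    pow_succ, pow_zero, one_mul, mul_one, mul_add, add_mul, mul_sub, sub_mul, neg_mul, mul_neg,
    smul_mul_assoc, mul_smul_comm, smul_smul, mul_assoc, smul_add,
    sub_eq_iff_eq_add'.mp h, mul_mul_of_mul_sub_mul_eq_one h]
  module

theorem weylM_eq_mul_weylR (h : d * z - z * d = 1) :
    let c : K → A := algebraMap K A
    weylM K z d = (2 * d ^ 3 + z ^ 2 * d ^ 2 + (- c (1/2) * z ^ 4 + 4 * z) * d
      + (- c (1/4) * z ^ 6 + 4)) * weylR K z d := by
  simp only [weylM, weylR, Algebra.algebraMap_eq_smul_one, ← map_ofNat (algebraMap K A),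
    pow_succ, pow_zero, one_mul, mul_one, mul_add, add_mul, mul_sub, sub_mul, neg_mul, mul_neg,
    smul_mul_assoc, mul_smul_comm, smul_smul, mul_assoc, smul_add,
    sub_eq_iff_eq_add'.mp h, mul_mul_of_mul_sub_mul_eq_one h]
  module

end WeylRelation

/-- Example: the third order operator
`R = ∂³ − (1/2)z²∂² + z(−(1/4)z³ + 1)∂ + ((1/8)z⁶ − (3/2)z³ + 1)`
right-divides both
`L = (∂² − z⁴/4)² + 2∂ − z²` and
`M = 2∂⁶ − (3/2)z⁴∂⁴ + 6(1−2z³)∂³ + z²((3/8)z⁶ − 45)∂² + z(3z⁶ − (3/2)z³ − 54)∂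
     + (−(1/32)z¹² + (37/4)z⁶ − 3z³ − 14)`.
This is stated in any ℂ-algebra with elements `z`, `∂` satisfying the Weyl
relation `∂z − z∂ = 1`; by the universal property of the Weyl algebra this is
equivalent to the statement in ℂ[z][∂]. -/
theorem right_division_example (A : Type*) [Ring A] [Algebra ℂ A]
    (z d : A) (h : d * z - z * d = 1) :
    let c : ℂ → A := algebraMap ℂ A
    let L : A := (d ^ 2 - c (1/4) * z ^ 4) ^ 2 + 2 * d - z ^ 2
    let M : A := 2 * d ^ 6 - c (3/2) * z ^ 4 * d ^ 4
      + 6 * (1 - 2 * z ^ 3) * d ^ 3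
      + z ^ 2 * (c (3/8) * z ^ 6 - 45) * d ^ 2
      + z * (3 * z ^ 6 - c (3/2) * z ^ 3 - 54) * d
      + (- c (1/32) * z ^ 12 + c (37/4) * z ^ 6 - 3 * z ^ 3 - 14)
    let R : A := d ^ 3 - c (1/2) * z ^ 2 * d ^ 2
      + z * (- c (1/4) * z ^ 3 + 1) * d
      + (c (1/8) * z ^ 6 - c (3/2) * z ^ 3 + 1)
    ∃ Q₁ Q₂ : A, L = Q₁ * R ∧ M = Q₂ * R :=
  ⟨_, _, weylL_eq_mul_weylR h, weylM_eq_mul_weylR h⟩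
end
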